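/- arXiv:2402.05038 — 11 statements merged into one kernel-verified Lean document; each statement's English description precedes it below -/
import Mathlib

section
/- Let $J$ be a countable (or finite) index set, let $1<p<+\infty$ with conjugate exponent $p^*=p/(p-1)$, and let $\mu=(\mu_j)_{j\in J}$ be a family of nonzero scalars. Then the infimum, over all $x\in\ell^1(J)$ with $\sum_{j\in J}|x_j|=1$, of $(\sum_{j\in J}|x_j\mu_j|^p)^{1/p}$ equals $(\sum_{j\in J}|\mu_j|^{-p^*})^{-1/p^*}$, with the convention $\infty^{-1}=0$. -/
/-!
Hölder's inequality against the weights `|μ_j|⁻¹` gives `1 = ∑ |x_j| ≤ ‖x μ‖_p ‖μ⁻¹‖_{p*}`,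
which is the lower bound. Equality in Hölder holds for `x_j ∝ |μ_j|^{-p*}`; normalising this
vector on a finite set `F` gives an admissible `x` of value `(∑_{j ∈ F} |μ_j|^{-p*})^{-1/p*}`,
and since the full sum is the supremum of its finite partial sums, these values decrease to
the right-hand side, also when the sum diverges.
-/

open scoped ENNReal NNReal

section

variable {J : Type*} {p q : ℝ}

open MeasureTheory in
theorem ENNReal.tsum_mul_le_Lp_mul_Lq (f g : J → ℝ≥0∞) (hpq : p.HolderConjugate q) :
    ∑' j, f j * g j ≤ (∑' j, f j ^ p) ^ (1 / p) * (∑' j, g j ^ q) ^ (1 / q) := by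
  let : MeasurableSpace J := ⊤
  have : MeasurableSingletonClass J := ⟨fun _ => trivial⟩
  simpa [lintegral_count] using lintegral_mul_le_Lp_mul_Lq Measure.count hpq
    (Measurable.aemeasurable (f := f) fun _ _ => trivial)
    (Measurable.aemeasurable (f := g) fun _ _ => trivial)

theorem ENNReal.iSup_rpow_neg {ι : Sort*} (f : ι → ℝ≥0∞) {r : ℝ} (hr : 0 < r) :
    (⨆ i, f i) ^ (-r) = ⨅ i, f i ^ (-r) := by
  simp only [ENNReal.rpow_neg, ← ENNReal.inv_iSup]
  congr 1
  exact (ENNReal.orderIsoRpow r hr).map_iSup f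

theorem ENNReal.tsum_rpow_neg_rpow_le_of_tsum_eq_one (hpq : p.HolderConjugate q)
    {a : J → ℝ≥0∞} {b : J → ℝ≥0} (hb : ∀ j, b j ≠ 0) (ha : ∑' j, a j = 1) :
    (∑' j, (b j : ℝ≥0∞) ^ (-q)) ^ (-(1 / q)) ≤ (∑' j, (a j * b j) ^ p) ^ (1 / p) := by
  set s := (∑' j, (a j * b j) ^ p) ^ (1 / p)
  set S := ∑' j, (b j : ℝ≥0∞) ^ (-q)
  have holder : 1 ≤ s * S ^ (1 / q) :=
    calc 1 = ∑' j, a j * b j * (b j : ℝ≥0∞)⁻¹ := by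
          rw [← ha]
          refine tsum_congr fun j => ?_
          rw [mul_assoc, ENNReal.mul_inv_cancel (by simpa using hb j) ENNReal.coe_ne_top, mul_one]
      _ ≤ s * (∑' j, ((b j : ℝ≥0∞)⁻¹) ^ q) ^ (1 / q) := ENNReal.tsum_mul_le_Lp_mul_Lq _ _ hpq
      _ = s * S ^ (1 / q) := by simp only [ENNReal.inv_rpow, ← ENNReal.rpow_neg, S]
  obtain ⟨hs, hS⟩ := mul_ne_zero_iff.1 (zero_lt_one.trans_le holder).ne'
  rw [ENNReal.rpow_neg, ENNReal.inv_le_iff_le_mul (fun _ => hS) (fun _ => hs), mul_comm]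
  exact holder

theorem NNReal.sum_rpow_neg_div_mul_rpow (hpq : p.HolderConjugate q) {F : Finset J}
    {b : J → ℝ≥0} (hb : ∀ j ∈ F, b j ≠ 0) (hT : ∑ j ∈ F, b j ^ (-q) ≠ 0) :
    ∑ j ∈ F, (b j ^ (-q) / (∑ i ∈ F, b i ^ (-q)) * b j) ^ p
      = (∑ j ∈ F, b j ^ (-q)) ^ (1 - p) := by
  set T := ∑ j ∈ F, b j ^ (-q)
  have hterm : ∀ j ∈ F, (b j ^ (-q) / T * b j) ^ p = b j ^ (-q) / T ^ p := fun j hj => by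
    rw [div_mul_eq_mul_div, ← NNReal.rpow_add_one (hb j hj), NNReal.div_rpow,
      ← NNReal.rpow_mul, show (-q + 1) * p = -q by linear_combination -hpq.mul_eq_add]
  rw [Finset.sum_congr rfl hterm, ← Finset.sum_div, NNReal.rpow_sub hT, NNReal.rpow_one]

theorem ENNReal.exists_tsum_eq_one_and_tsum_mul_rpow_rpow_eq (hpq : p.HolderConjugate q)
    {b : J → ℝ≥0} (hb : ∀ j, b j ≠ 0) {F : Finset J} (hF : F.Nonempty) :
    ∃ w : J → ℝ≥0, ∑' j, (w j : ℝ≥0∞) = 1 ∧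
      (∑' j, ((w j : ℝ≥0∞) * b j) ^ p) ^ (1 / p) = (∑ j ∈ F, (b j : ℝ≥0∞) ^ (-q)) ^ (-(1 / q)) := by
  classical
  set T := ∑ j ∈ F, b j ^ (-q)
  have hT : T ≠ 0 := (Finset.sum_pos (fun j _ => NNReal.rpow_pos (pos_iff_ne_zero.2 (hb j))) hF).ne'
  set w : J → ℝ≥0 := fun j => if j ∈ F then b j ^ (-q) / T else 0
  have hw : ∀ j ∈ F, w j = b j ^ (-q) / T := fun j hj => if_pos hj
  have tsum_coe : ∀ f : J → ℝ≥0, (∀ j ∉ F, f j = 0) → ∑' j, (f j : ℝ≥0∞) = ↑(∑ j ∈ F, f j) :=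
    fun f hf => by rw [tsum_eq_sum fun j hj => by simp [hf j hj], ENNReal.ofNNReal_finsetSum]
  have hrpow : ∀ j, ((w j : ℝ≥0∞) * b j) ^ p = ↑((w j * b j) ^ p) := fun j => by
    rw [← ENNReal.coe_mul, ENNReal.coe_rpow_of_nonneg _ hpq.nonneg]
  have hexp : (1 - p) * (1 / p) = -(1 / q) := by
    rw [sub_mul, one_mul, mul_one_div_cancel hpq.ne_zero, one_div, one_div, hpq.inv_sub_one]
  refine ⟨w, ?_, ?_⟩
  · rw [tsum_coe w fun j hj => if_neg hj, Finset.sum_congr rfl hw, ← Finset.sum_div,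
      div_self hT, ENNReal.coe_one]
  · rw [tsum_congr hrpow, tsum_coe _ fun j hj => by simp [w, hj, hpq.pos.ne'],
      Finset.sum_congr rfl fun j hj => by rw [hw j hj],
      NNReal.sum_rpow_neg_div_mul_rpow hpq (fun j _ => hb j) hT,
      ← ENNReal.coe_rpow_of_nonneg _ (one_div_nonneg.2 hpq.nonneg), ← NNReal.rpow_mul, hexp,
      ENNReal.coe_rpow_of_ne_zero hT, ENNReal.ofNNReal_finsetSum]
    simp only [ENNReal.coe_rpow_of_ne_zero (hb _)]

end

theorem stmt1_general {𝕜 J : Type*} [RCLike 𝕜] (μ : J → 𝕜) (hμ : ∀ j, μ j ≠ 0)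
    (p : ℝ) (hp : 1 < p) :
    sInf {s : ℝ≥0∞ | ∃ x : J → 𝕜,
        (∑' j, (‖x j‖₊ : ℝ≥0∞)) = 1 ∧
        s = (∑' j, (‖x j * μ j‖₊ : ℝ≥0∞) ^ p) ^ (1 / p)}
      = (∑' j, (‖μ j‖₊ : ℝ≥0∞) ^ (-(p / (p - 1)))) ^ (-(1 / (p / (p - 1)))) := by
  set q := p / (p - 1)
  have hpq : p.HolderConjugate q := .conjExponent hp
  have hμ' : ∀ j, ‖μ j‖₊ ≠ 0 := fun j => nnnorm_ne_zero_iff.2 (hμ j)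
  have hnorm : ∀ w : ℝ≥0, ‖((w : ℝ) : 𝕜)‖₊ = w := fun w => NNReal.eq (by simp)
  refine le_antisymm ?_ (le_sInf ?_)
  · rw [ENNReal.tsum_eq_iSup_sum, ENNReal.iSup_rpow_neg _ (one_div_pos.2 hpq.symm.pos)]
    refine le_iInf fun F => ?_
    rcases F.eq_empty_or_nonempty with rfl | hF
    · simp [ENNReal.zero_rpow_of_neg, hpq.symm.pos]
    obtain ⟨w, hw1, hw⟩ := ENNReal.exists_tsum_eq_one_and_tsum_mul_rpow_rpow_eq hpq hμ' hF
    refine sInf_le ⟨fun j => ((w j : ℝ) : 𝕜), by simpa only [hnorm] using hw1, ?_⟩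
    simp only [nnnorm_mul, hnorm, ENNReal.coe_mul, hw]
  · rintro _ ⟨x, hx, rfl⟩
    simpa only [nnnorm_mul, ENNReal.coe_mul] using
      ENNReal.tsum_rpow_neg_rpow_le_of_tsum_eq_one hpq hμ' hx

/-- Lemma 4.2 of Grosse-Erdmann–Papathanasiou, second identity:
for `1 < p < ∞` with conjugate exponent `p* = p/(p-1)`, the infimum of
`(∑ |x_j μ_j|^p)^(1/p)` over `x` with `∑ |x_j| = 1` equals
`(∑ |μ_j|^{-p*})^{-1/p*}` (with the convention `∞⁻¹ = 0`, which is built into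
`ENNReal.rpow` with a negative exponent). -/
theorem stmt1 {𝕜 J : Type*} [RCLike 𝕜] [Countable J] (μ : J → 𝕜) (hμ : ∀ j, μ j ≠ 0)
    (p : ℝ) (hp : 1 < p) :
    sInf {s : ℝ≥0∞ | ∃ x : J → 𝕜,
        (∑' j, (‖x j‖₊ : ℝ≥0∞)) = 1 ∧
        s = (∑' j, (‖x j * μ j‖₊ : ℝ≥0∞) ^ p) ^ (1 / p)}
      = (∑' j, (‖μ j‖₊ : ℝ≥0∞) ^ (-(p / (p - 1)))) ^ (-(1 / (p / (p - 1)))) :=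
  stmt1_general μ hμ p hp
end

section
/- Let $X$ be a Banach space and $T$ a bounded linear operator on $X$. Suppose that for every nonempty weakly open subset $U$ of $X$ there exists an integer $n\geq 1$ with $T^n(U)\cap U\neq\emptyset$. Then for every nonempty weakly open subset $U$ of $X$ there exist infinitely many integers $k\geq 1$ with $T^k(U)\cap U\neq\emptyset$. -/
/-!
A bounded operator is continuous for the weak topology, so it suffices to treat a continuous
self-map `f` of a topological space all of whose nonempty open sets return to themselves. If `U`
returns at time `k`, the nonempty open set `U ∩ f^[k] ⁻¹' U` returns at some time `m ≥ 1`, and then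
`U` returns at time `k + m`; hence `U` has no largest return time.
-/

open Set Function

section Recurrence

variable {α : Type*} [TopologicalSpace α] {f : α → α}

theorem exists_return_add_of_return (hf : Continuous f)
    (h : ∀ V : Set α, IsOpen V → V.Nonempty → ∃ n, 1 ≤ n ∧ (f^[n] '' V ∩ V).Nonempty)
    {U : Set α} (hU : IsOpen U) {k : ℕ} (hk : (f^[k] '' U ∩ U).Nonempty) :
    ∃ m, 1 ≤ m ∧ (f^[k + m] '' U ∩ U).Nonempty := by
  have hV : IsOpen (U ∩ f^[k] ⁻¹' U) := hU.inter (hU.preimage (hf.iterate k))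
  have hVne : (U ∩ f^[k] ⁻¹' U).Nonempty := by
    obtain ⟨_, ⟨x, hxU, rfl⟩, hkx⟩ := hk
    exact ⟨x, hxU, hkx⟩
  obtain ⟨m, hm, _, ⟨x, hxV, rfl⟩, hmx⟩ := h _ hV hVne
  refine ⟨m, hm, f^[k + m] x, ⟨x, hxV.1, rfl⟩, ?_⟩
  rw [iterate_add_apply]
  exact hmx.2

theorem infinite_setOf_return_of_forall_exists_return (hf : Continuous f)
    (h : ∀ V : Set α, IsOpen V → V.Nonempty → ∃ n, 1 ≤ n ∧ (f^[n] '' V ∩ V).Nonempty)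
    {U : Set α} (hU : IsOpen U) (hne : U.Nonempty) :
    {k : ℕ | 1 ≤ k ∧ (f^[k] '' U ∩ U).Nonempty}.Infinite := by
  intro hfin
  obtain ⟨n, hn, hret⟩ := h U hU hne
  obtain ⟨k, ⟨hk, hkret⟩, hmax⟩ := hfin.exists_maximal ⟨n, hn, hret⟩
  obtain ⟨m, hm, hkm⟩ := exists_return_add_of_return hf h hU hkret
  have := hmax ⟨by omega, hkm⟩ (by omega)
  omega

end Recurrence

theorem Function.Semiconj.image_iterate_inter_nonempty_iff {α β : Type*} {e : α → β}
    {f : α → α} {g : β → β} (he : Injective e) (hs : Semiconj e f g) (U : Set α) (n : ℕ) :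
    (g^[n] '' (e '' U) ∩ e '' U).Nonempty ↔ (f^[n] '' U ∩ U).Nonempty := by
  rw [← (hs.iterate_right n).set_image U, ← image_inter he, image_nonempty]

theorem stmt4_general {X : Type*} [NormedAddCommGroup X] [NormedSpace ℝ X]
    (T : X →L[ℝ] X)
    (h : ∀ U : Set X, U.Nonempty → IsOpen (toWeakSpace ℝ X '' U) →
      ∃ n : ℕ, 1 ≤ n ∧ ((T ^ n) '' U ∩ U).Nonempty) :
    ∀ U : Set X, U.Nonempty → IsOpen (toWeakSpace ℝ X '' U) →
      {k : ℕ | 1 ≤ k ∧ ((T ^ k) '' U ∩ U).Nonempty}.Infinite := by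
  have hs : Semiconj (toWeakSpace ℝ X) T (WeakSpace.map T) := fun _ => rfl
  have hiff := hs.image_iterate_inter_nonempty_iff (toWeakSpace ℝ X).injective
  simp only [FunLike.coe_pow_eq_iterate] at h ⊢
  intro U hne hU
  simp only [← hiff]
  refine infinite_setOf_return_of_forall_exists_return (WeakSpace.map T).continuous
    (fun V hV hVne => ?_) hU (hne.image _)
  have himage := image_preimage_eq V (toWeakSpace ℝ X).surjective
  obtain ⟨n, hn, hret⟩ := h (toWeakSpace ℝ X ⁻¹' V) (hVne.preimage (toWeakSpace ℝ X).surjective)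
    (by rwa [himage])
  rw [← hiff, himage] at hret
  exact ⟨n, hn, hret⟩

/-- If every nonempty weakly open subset of a Banach space returns to itself under
some positive iterate of `T`, then every nonempty weakly open subset returns to
itself for infinitely many positive iterates. -/
theorem stmt4 {X : Type*} [NormedAddCommGroup X] [NormedSpace ℝ X] [CompleteSpace X]
    (T : X →L[ℝ] X)
    (h : ∀ U : Set X, U.Nonempty → IsOpen (toWeakSpace ℝ X '' U) →
      ∃ n : ℕ, 1 ≤ n ∧ ((T ^ n) '' U ∩ U).Nonempty) :
    ∀ U : Set X, U.Nonempty → IsOpen (toWeakSpace ℝ X '' U) →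
      {k : ℕ | 1 ≤ k ∧ ((T ^ k) '' U ∩ U).Nonempty}.Infinite :=
  stmt4_general T h
end

section
/- Let $X$ be a Banach space, $T$ a bounded linear operator on $X$, and $\mathcal{F}$ a Furstenberg family of subsets of $\mathbb{N}_0$ such that $A\cap[n,+\infty)\in\mathcal{F}$ whenever $A\in\mathcal{F}$ and $n\in\mathbb{N}$. If the set $X_0=\{x\in X: \lim_{n\to\infty}T^n x = 0\}$ is dense in $X$, then $T$ is $\mathcal{F}$-transitive if and only if $T$ is topologically $\mathcal{F}$-recurrent. -/
/-!
Given open `U, V`, pick `u ∈ U` and `v ∈ V` with `Tⁿ u → 0` and `Tⁿ v → 0`, and a small open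
neighbourhood `W` of `v`. If `w ∈ W` and `Tⁿ w ∈ W` for some large `n`, then the corrected point
`u + (w - v)` lies in `U` and `Tⁿ (u + (w - v)) = Tⁿ w + Tⁿ u - Tⁿ v` lies in `V`. Hence
`N(U, V)` contains a tail of `N(W, W)`, which lies in `F` by recurrence.
-/

open Set Filter Topology

section

variable {R X : Type*} [Semiring R] [TopologicalSpace X] [AddCommGroup X]
  [IsTopologicalAddGroup X] [Module R X]

def returnSet (T : X →L[R] X) (U V : Set X) : Set ℕ :=
  {n | ((T ^ n) '' U ∩ V).Nonempty}

theorem exists_isOpen_returnSet_self_eventually_subset (T : X →L[R] X) {u v : X}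
    {U V : Set X} (hu : Tendsto (fun n => (T ^ n) u) atTop (𝓝 0))
    (hv : Tendsto (fun n => (T ^ n) v) atTop (𝓝 0)) (hU : U ∈ 𝓝 u) (hV : V ∈ 𝓝 v) :
    ∃ W : Set X, IsOpen W ∧ v ∈ W ∧
      ∀ᶠ n in atTop, n ∈ returnSet T W W → n ∈ returnSet T U V := by
  have hU₀ : (u + ·) ⁻¹' U ∈ 𝓝 0 := (continuous_const_add u).tendsto' 0 u (add_zero u) hU
  have hV₀ : (v + ·) ⁻¹' V ∈ 𝓝 0 := (continuous_const_add v).tendsto' 0 v (add_zero v) hV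
  obtain ⟨S, hS, hSV⟩ := exists_nhds_zero_quarter hV₀
  have hsum : ∀ {a b c}, a ∈ S → b ∈ S → c ∈ S → v + (a + b + c) ∈ V := fun ha hb hc => by
    simpa using hSV ha hb hc (mem_of_mem_nhds hS)
  obtain ⟨t, htS, hto, ht0⟩ := mem_nhds_iff.1 (inter_mem hS hU₀)
  refine ⟨(· - v) ⁻¹' t, hto.preimage (continuous_sub_right v), by simpa using ht0, ?_⟩
  filter_upwards [hu hS, hv.neg (by simpa using hS)] with n hun hvn
  rintro ⟨_, ⟨w, hw, rfl⟩, hTw⟩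
  refine ⟨(T ^ n) (u + (w - v)), mem_image_of_mem _ (htS hw).2, ?_⟩
  have hsplit : (T ^ n) (u + (w - v)) = v + ((T ^ n) u + ((T ^ n) w - v) + -(T ^ n) v) := by
    rw [map_add, map_sub]; abel
  rw [hsplit]
  exact hsum hun (htS hTw).1 hvn

theorem returnSet_mem_of_returnSet_self_mem (T : X →L[R] X) {F : Set (Set ℕ)}
    (hup : ∀ A ∈ F, ∀ B : Set ℕ, A ⊆ B → B ∈ F)
    (htail : ∀ A ∈ F, ∀ n : ℕ, (A ∩ {m | n ≤ m}) ∈ F)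
    (hdense : Dense {x : X | Tendsto (fun n => (T ^ n) x) atTop (𝓝 0)})
    (hrec : ∀ U : Set X, IsOpen U → U.Nonempty → returnSet T U U ∈ F)
    {U V : Set X} (hU : IsOpen U) (hUne : U.Nonempty) (hV : IsOpen V) (hVne : V.Nonempty) :
    returnSet T U V ∈ F := by
  obtain ⟨u, hu, huU⟩ := hdense.exists_mem_open hU hUne
  obtain ⟨v, hv, hvV⟩ := hdense.exists_mem_open hV hVne
  obtain ⟨W, hWo, hvW, hWUV⟩ :=
    exists_isOpen_returnSet_self_eventually_subset T hu hv (hU.mem_nhds huU) (hV.mem_nhds hvV)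
  obtain ⟨N, hN⟩ := eventually_atTop.1 hWUV
  exact hup _ (htail _ (hrec W hWo ⟨v, hvW⟩) N) _ fun n hn => hN n hn.2 hn.1

end

theorem stmt5_general {X : Type*} [NormedAddCommGroup X] [NormedSpace ℝ X]
    (T : X →L[ℝ] X) (F : Set (Set ℕ))
    (hup : ∀ A ∈ F, ∀ B : Set ℕ, A ⊆ B → B ∈ F)
    (htail : ∀ A ∈ F, ∀ n : ℕ, (A ∩ {m | n ≤ m}) ∈ F)
    (hdense : Dense {x : X | Filter.Tendsto (fun n => (T ^ n) x) Filter.atTop (nhds 0)}) :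
    (∀ U V : Set X, IsOpen U → U.Nonempty → IsOpen V → V.Nonempty →
        {n : ℕ | ((T ^ n) '' U ∩ V).Nonempty} ∈ F) ↔
    (∀ U : Set X, IsOpen U → U.Nonempty →
        {n : ℕ | ((T ^ n) '' U ∩ U).Nonempty} ∈ F) :=
  ⟨fun htrans U hU hUne => htrans U U hU hUne hU hUne,
    fun hrec _ _ hU hUne hV hVne =>
      returnSet_mem_of_returnSet_self_mem T hup htail hdense hrec hU hUne hV hVne⟩

/-- For an operator whose vectors with orbits tending to `0` are dense, and a
Furstenberg family `F` closed under intersecting with tails, `F`-transitivity is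
equivalent to topological `F`-recurrence. -/
theorem stmt5 {X : Type*} [NormedAddCommGroup X] [NormedSpace ℝ X] [CompleteSpace X]
    (T : X →L[ℝ] X) (F : Set (Set ℕ))
    (hne : F.Nonempty)
    (hinf : ∀ A ∈ F, A.Infinite)
    (hup : ∀ A ∈ F, ∀ B : Set ℕ, A ⊆ B → B ∈ F)
    (htail : ∀ A ∈ F, ∀ n : ℕ, (A ∩ {m | n ≤ m}) ∈ F)
    (hdense : Dense {x : X | Filter.Tendsto (fun n => (T ^ n) x) Filter.atTop (nhds 0)}) :
    (∀ U V : Set X, IsOpen U → U.Nonempty → IsOpen V → V.Nonempty →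
        {n : ℕ | ((T ^ n) '' U ∩ V).Nonempty} ∈ F) ↔
    (∀ U : Set X, IsOpen U → U.Nonempty →
        {n : ℕ | ((T ^ n) '' U ∩ U).Nonempty} ∈ F) :=
  stmt5_general T F hup htail hdense
end

section
/- Let $X$ be a separable infinite-dimensional Banach space and $T$ a bounded linear operator on $X$ whose generalized kernel $\ker^*(T)=\bigcup_{n\geq 1}\ker(T^n)$ is dense in $X$. If $T$ has dense range, then for any unbounded subset $\Gamma$ of $\mathbb{C}$, the operator $T\oplus T$ on $X\times X$ is $\Gamma$-transitive in the following sense: for all nonempty open sets $U_1,U_2,V_1,V_2\subset X$ there exist $n\in\mathbb{N}$, $\lambda\in\Gamma$, and $(x_1,x_2)\in U_1\times U_2$ with $(\lambda T^n x_1, \lambda T^n x_2)\in V_1\times V_2$. -/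
/-!
Pick `uᵢ ∈ Uᵢ` in the generalized kernel, so that `T ^ m` kills both for a common `m`, and
`zᵢ` with `T ^ m zᵢ ∈ Vᵢ`, possible since `T ^ m` has dense range. Then `xᵢ = uᵢ + λ⁻¹ zᵢ`
satisfies `λ T ^ m xᵢ = T ^ m zᵢ ∈ Vᵢ` for every `λ ≠ 0`, and `xᵢ ∈ Uᵢ` once `‖λ‖` is large,
which the unboundedness of `Γ` allows.
-/

open Filter Topology Bornology

theorem DenseRange.iterate {α : Type*} [TopologicalSpace α] {f : α → α} (hf : DenseRange f)
    (hc : Continuous f) (n : ℕ) : DenseRange f^[n] := by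
  induction n with
  | zero => exact denseRange_id
  | succ n ih => exact Function.iterate_succ' f n ▸ hf.comp ih hc

theorem ContinuousLinearMap.pow_apply_eq_zero_of_le {R M : Type*} [Semiring R]
    [AddCommMonoid M] [Module R M] [TopologicalSpace M] {T : M →L[R] M} {x : M} {k l : ℕ}
    (hkl : k ≤ l) (hx : (T ^ k) x = 0) : (T ^ l) x = 0 := by
  rw [← pow_sub_mul_pow T hkl, mul_apply_eq_comp, hx, map_zero]

theorem frequently_cobounded_of_forall_exists_lt_norm {E : Type*} [SeminormedAddCommGroup E]
    {s : Set E} (hs : ∀ R : ℝ, ∃ x ∈ s, R < ‖x‖) : ∃ᶠ x in cobounded E, x ∈ s :=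
  hasBasis_cobounded_norm.frequently_iff.2 fun R _ ↦
    let ⟨x, hxs, hx⟩ := hs R; ⟨x, hx.le, hxs⟩

theorem tendsto_add_inv_smul_cobounded {𝕜 E : Type*} [NormedDivisionRing 𝕜]
    [NormedAddCommGroup E] [Module 𝕜 E] [NormSMulClass 𝕜 E] (u z : E) :
    Tendsto (fun c : 𝕜 ↦ u + c⁻¹ • z) (cobounded 𝕜) (𝓝 u) := by
  simpa using tendsto_const_nhds.add ((tendsto_inv₀_cobounded (α := 𝕜)).smul_const z)

theorem eventually_cobounded_add_inv_smul_mem_and_smul_apply_eq {𝕜 E G F : Type*}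
    [NormedDivisionRing 𝕜] [NormedAddCommGroup E] [Module 𝕜 E] [NormSMulClass 𝕜 E]
    [AddCommGroup G] [Module 𝕜 G] [FunLike F E G] [LinearMapClass F 𝕜 E G] {f : F} {u : E}
    (hu : f u = 0) {U : Set E} (hU : U ∈ 𝓝 u) (z : E) :
    ∀ᶠ c in cobounded 𝕜, u + c⁻¹ • z ∈ U ∧ c • f (u + c⁻¹ • z) = f z :=
  ((tendsto_add_inv_smul_cobounded u z).eventually_mem hU).and <|
    (eventually_ne_cobounded 0).mono fun c hc ↦ by
      rw [map_add, map_smul, hu, zero_add, smul_inv_smul₀ hc]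

theorem stmt6_general {X : Type*} [NormedAddCommGroup X] [NormedSpace ℂ X]
    (T : X →L[ℂ] X)
    (hker : Dense {x : X | ∃ n : ℕ, 1 ≤ n ∧ (T ^ n) x = 0})
    (hrange : DenseRange T)
    (Γ : Set ℂ) (hΓ : ∀ R : ℝ, ∃ lam ∈ Γ, R < ‖lam‖) :
    ∀ U₁ U₂ V₁ V₂ : Set X,
      IsOpen U₁ → U₁.Nonempty → IsOpen U₂ → U₂.Nonempty →
      IsOpen V₁ → V₁.Nonempty → IsOpen V₂ → V₂.Nonempty →
      ∃ n : ℕ, ∃ lam ∈ Γ, ∃ x₁ ∈ U₁, ∃ x₂ ∈ U₂,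
        lam • (T ^ n) x₁ ∈ V₁ ∧ lam • (T ^ n) x₂ ∈ V₂ := by
  intro U₁ U₂ V₁ V₂ hU₁ hU₁ne hU₂ hU₂ne hV₁ hV₁ne hV₂ hV₂ne
  obtain ⟨u₁, ⟨m₁, -, hu₁⟩, hu₁U⟩ := hker.exists_mem_open hU₁ hU₁ne
  obtain ⟨u₂, ⟨m₂, -, hu₂⟩, hu₂U⟩ := hker.exists_mem_open hU₂ hU₂ne
  set m := max m₁ m₂
  have hdense : DenseRange (T ^ m) := by
    rw [FunLike.coe_pow_eq_iterate]
    exact hrange.iterate T.continuous m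
  obtain ⟨z₁, hz₁⟩ := hdense.exists_mem_open hV₁ hV₁ne
  obtain ⟨z₂, hz₂⟩ := hdense.exists_mem_open hV₂ hV₂ne
  have h₁ := eventually_cobounded_add_inv_smul_mem_and_smul_apply_eq (𝕜 := ℂ)
    (T.pow_apply_eq_zero_of_le (le_max_left m₁ m₂) hu₁) (hU₁.mem_nhds hu₁U) z₁
  have h₂ := eventually_cobounded_add_inv_smul_mem_and_smul_apply_eq (𝕜 := ℂ)
    (T.pow_apply_eq_zero_of_le (le_max_right m₁ m₂) hu₂) (hU₂.mem_nhds hu₂U) z₂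
  obtain ⟨c, hcΓ, ⟨hx₁, hc₁⟩, hx₂, hc₂⟩ :=
    ((frequently_cobounded_of_forall_exists_lt_norm hΓ).and_eventually (h₁.and h₂)).exists
  exact ⟨m, c, hcΓ, _, hx₁, _, hx₂, hc₁ ▸ hz₁, hc₂ ▸ hz₂⟩

/-- If `T` has dense generalized kernel and dense range on a separable
infinite-dimensional complex Banach space, then for any unbounded `Γ ⊆ ℂ` the
operator `T ⊕ T` is `Γ`-transitive. -/
theorem stmt6 {X : Type*} [NormedAddCommGroup X] [NormedSpace ℂ X] [CompleteSpace X]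
    [TopologicalSpace.SeparableSpace X]
    (hdim : ¬ FiniteDimensional ℂ X)
    (T : X →L[ℂ] X)
    (hker : Dense {x : X | ∃ n : ℕ, 1 ≤ n ∧ (T ^ n) x = 0})
    (hrange : DenseRange T)
    (Γ : Set ℂ) (hΓ : ∀ R : ℝ, ∃ lam ∈ Γ, R < ‖lam‖) :
    ∀ U₁ U₂ V₁ V₂ : Set X,
      IsOpen U₁ → U₁.Nonempty → IsOpen U₂ → U₂.Nonempty →
      IsOpen V₁ → V₁.Nonempty → IsOpen V₂ → V₂.Nonempty →
      ∃ n : ℕ, ∃ lam ∈ Γ, ∃ x₁ ∈ U₁, ∃ x₂ ∈ U₂,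
        lam • (T ^ n) x₁ ∈ V₁ ∧ lam • (T ^ n) x₂ ∈ V₂ :=
  stmt6_general T hker hrange Γ hΓ
end

section
/- Let $X$ be a separable infinite-dimensional Banach space and $T$ a bounded linear operator on $X$ whose generalized kernel $\bigcup_{n\geq1}\ker(T^n)$ is dense in $X$. If there exists an unbounded subset $\Gamma\subset\mathbb{C}$ such that $T$ is $\Gamma$-supercyclic, then $T$ has dense range. -/
/-! The orbit `{c • T^n x}` lies in `span {x} ∪ range T`, so its closure lies in the union of the
finite-dimensional subspace `span {x}` and the closed subspace `closure (range T)`. A vector space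
is never the union of two proper subspaces, and `span {x}` is proper in infinite dimension, so
`closure (range T)` is everything. -/

open Set

theorem Submodule.eq_top_or_eq_top_of_dense_subset_union {R E : Type*} [Ring R] [AddCommGroup E]
    [Module R E] [TopologicalSpace E] {p q : Submodule R E} (hp : IsClosed (p : Set E))
    (hq : IsClosed (q : Set E)) {s : Set E} (hs : Dense s) (hsub : s ⊆ p ∪ q) :
    p = ⊤ ∨ q = ⊤ := by
  have hcover : ((⊤ : Submodule R E) : Set E) ⊆ p ∪ q := by
    simpa [hs.closure_eq] using closure_minimal hsub (hp.union hq)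
  simpa only [top_le_iff] using AddSubgroupClass.subset_union.mp hcover

theorem ContinuousLinearMap.smul_pow_apply_mem_span_union_range {R E : Type*} [CommSemiring R]
    [AddCommMonoid E] [Module R E] [TopologicalSpace E] (T : E →L[R] E) (x : E) (c : R) (n : ℕ) :
    c • (T ^ n) x ∈ ((R ∙ x : Submodule R E) : Set E) ∪ range T := by
  cases n with
  | zero =>
    exact Or.inl (by simpa using Submodule.smul_mem _ c (Submodule.mem_span_singleton_self x))
  | succ n => exact Or.inr ⟨c • (T ^ n) x, by simp [pow_succ']⟩

theorem ContinuousLinearMap.denseRange_of_dense_smul_pow_orbit {𝕜 E : Type*}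
    [NontriviallyNormedField 𝕜] [CompleteSpace 𝕜] [AddCommGroup E] [Module 𝕜 E]
    [TopologicalSpace E] [IsTopologicalAddGroup E] [ContinuousSMul 𝕜 E] [T2Space E]
    (hdim : ¬ FiniteDimensional 𝕜 E) (T : E →L[𝕜] E) {x : E} {Γ : Set 𝕜}
    (horbit : Dense {y : E | ∃ c ∈ Γ, ∃ n : ℕ, y = c • (T ^ n) x}) :
    DenseRange T := by
  have hsub : {y : E | ∃ c ∈ Γ, ∃ n : ℕ, y = c • (T ^ n) x} ⊆
      ((𝕜 ∙ x : Submodule 𝕜 E) : Set E) ∪ (LinearMap.range (T : E →ₗ[𝕜] E)).topologicalClosure := by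
    rintro _ ⟨c, -, n, rfl⟩
    exact union_subset_union_right _ subset_closure (T.smul_pow_apply_mem_span_union_range x c n)
  rcases Submodule.eq_top_or_eq_top_of_dense_subset_union (Submodule.closed_of_finiteDimensional _)
      (Submodule.isClosed_topologicalClosure _) horbit hsub with hspan | hrange
  · exact absurd ⟨⟨{x}, by simpa using hspan⟩⟩ hdim
  · rwa [← Submodule.dense_iff_topologicalClosure_eq_top, LinearMap.coe_range] at hrange

theorem stmt7_general {X : Type*} [NormedAddCommGroup X] [NormedSpace ℂ X]
    (hdim : ¬ FiniteDimensional ℂ X)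
    (T : X →L[ℂ] X)
    (Γ : Set ℂ)
    (hsc : ∃ x : X, Dense {y : X | ∃ lam ∈ Γ, ∃ n : ℕ, y = lam • (T ^ n) x}) :
    DenseRange T := by
  obtain ⟨x, hx⟩ := hsc
  exact T.denseRange_of_dense_smul_pow_orbit hdim hx

/-- If `T` has dense generalized kernel on a separable infinite-dimensional
complex Banach space and `T` is `Γ`-supercyclic for some unbounded `Γ ⊆ ℂ`,
then `T` has dense range. -/
theorem stmt7 {X : Type*} [NormedAddCommGroup X] [NormedSpace ℂ X] [CompleteSpace X]
    [TopologicalSpace.SeparableSpace X]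
    (hdim : ¬ FiniteDimensional ℂ X)
    (T : X →L[ℂ] X)
    (hker : Dense {x : X | ∃ n : ℕ, 1 ≤ n ∧ (T ^ n) x = 0})
    (Γ : Set ℂ) (hΓ : ∀ R : ℝ, ∃ lam ∈ Γ, R < ‖lam‖)
    (hsc : ∃ x : X, Dense {y : X | ∃ lam ∈ Γ, ∃ n : ℕ, y = lam • (T ^ n) x}) :
    DenseRange T :=
  stmt7_general hdim T Γ hsc
end

section
/- Let $(V,E)$ be a directed tree, $\mu=(\mu_v)_{v\in V}$ a weight of nonzero scalars, and $B$ the backward shift defined by $(Bf)(v)=\sum_{u\in\mathrm{Chi}(v)}f(u)$. Then $B$ is a bounded linear operator on $\ell^1(V,\mu)$ if and only if $\sup_{v\in V\setminus\{\mathrm{root}\}}|\mu_{\mathrm{par}(v)}/\mu_v|<+\infty$, and in that case $\|B\|$ equals this supremum. -/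
open scoped ENNReal NNReal

/-- A directed tree: a countable connected directed graph without circuits in
which every vertex has at most one parent. -/
structure DirTree {V : Type*} (E : V → V → Prop) : Prop where
  ne : ∀ u v : V, E u v → u ≠ v
  connected : ∀ u v : V, u ≠ v → ∃ n : ℕ, ∃ w : Fin (n + 2) → V,
    w 0 = u ∧ w (Fin.last (n + 1)) = v ∧
    ∀ i : Fin (n + 1), E (w i.castSucc) (w i.succ) ∨ E (w i.succ) (w i.castSucc)
  noCircuit : ∀ n : ℕ, ∀ w : Fin (n + 2) → V, Function.Injective w →
    ¬ ∀ i : Fin (n + 2), E (w i) (w (i + 1))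
  uniqueParent : ∀ v u₁ u₂ : V, E u₁ v → E u₂ v → u₁ = u₂

/-- The backward shift associated with an edge relation:
`(Bf)(v) = ∑_{u ∈ Chi(v)} f(u)`. -/
noncomputable def Bop {V 𝕜 : Type*} [RCLike 𝕜] (E : V → V → Prop) (f : V → 𝕜) : V → 𝕜 :=
  fun v => ∑' u : {u // E v u}, f u

/-- The weighted `ℓ^p`-"norm" `(∑_v |f(v) μ(v)|^p)^{1/p}`, valued in `ℝ≥0∞`. -/
noncomputable def pnorm {V 𝕜 : Type*} [RCLike 𝕜] (μ : V → 𝕜) (p : ℝ) (f : V → 𝕜) : ℝ≥0∞ :=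
  (∑' v, (‖f v * μ v‖₊ : ℝ≥0∞) ^ p) ^ (1 / p)

/-!
Testing `B` on the indicator of a single vertex `v` with parent `u` gives `‖B‖ ≥ |μ_u / μ_v|`.
Conversely, `|(Bf)(u) μ_u| ≤ ∑_{v ∈ Chi(u)} |μ_u / μ_v| |f(v) μ_v|`, and since every vertex has at
most one parent, summing over `u` counts each `|f(v) μ_v|` at most once.
-/

lemma pnorm_one_eq {V 𝕜 : Type*} [RCLike 𝕜] (μ : V → 𝕜) (f : V → 𝕜) :
    pnorm μ 1 f = ∑' v, (‖f v * μ v‖₊ : ℝ≥0∞) := by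
  simp [pnorm]

section UniqueParent

variable {V : Type*} {E : V → V → Prop}

lemma tsum_tsum_children_le_tsum (hE : ∀ v u₁ u₂ : V, E u₁ v → E u₂ v → u₁ = u₂)
    (g : V → ℝ≥0∞) : ∑' v, ∑' u : {u // E v u}, g u ≤ ∑' w, g w := by
  rw [← ENNReal.tsum_sigma' fun p : Σ v, {u // E v u} => g p.2]
  refine ENNReal.tsum_comp_le_tsum_of_injective
    (f := fun p : Σ v, {u // E v u} => p.2.1) ?_ g
  rintro ⟨v, u, hu⟩ ⟨v', u', hu'⟩ (rfl : u = u')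
  obtain rfl := hE u v v' hu hu'
  rfl

lemma pnorm_one_bop_le {𝕜 : Type*} [RCLike 𝕜]
    (hE : ∀ v u₁ u₂ : V, E u₁ v → E u₂ v → u₁ = u₂) {μ : V → 𝕜} (hμ : ∀ v, μ v ≠ 0)
    {C : ℝ≥0∞} (hC : ∀ u v, E u v → (‖μ u‖₊ : ℝ≥0∞) / ‖μ v‖₊ ≤ C) (f : V → 𝕜) :
    pnorm μ 1 (Bop E f) ≤ C * pnorm μ 1 f := by
  have hterm : ∀ v u, E v u → (‖f u‖₊ : ℝ≥0∞) * ‖μ v‖₊ ≤ C * ‖f u * μ u‖₊ := by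
    intro v u h
    have hμu : (‖μ u‖₊ : ℝ≥0∞) ≠ 0 := by simpa using hμ u
    calc (‖f u‖₊ : ℝ≥0∞) * ‖μ v‖₊
        = ‖f u‖₊ * (‖μ v‖₊ / ‖μ u‖₊ * ‖μ u‖₊) := by
          rw [ENNReal.div_mul_cancel hμu ENNReal.coe_ne_top]
      _ = ‖μ v‖₊ / ‖μ u‖₊ * ‖f u * μ u‖₊ := by
          rw [nnnorm_mul, ENNReal.coe_mul, mul_left_comm]
      _ ≤ C * ‖f u * μ u‖₊ := by gcongr; exact hC v u h
  rw [pnorm_one_eq, pnorm_one_eq]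
  calc ∑' v, (‖Bop E f v * μ v‖₊ : ℝ≥0∞)
      ≤ ∑' v, ∑' u : {u // E v u}, (‖f u‖₊ : ℝ≥0∞) * ‖μ v‖₊ := by
        refine ENNReal.tsum_le_tsum fun v => ?_
        rw [nnnorm_mul, ENNReal.coe_mul, ENNReal.tsum_mul_right]
        gcongr
        exact enorm_tsum_le_tsum_enorm (f := fun u : {u // E v u} => f u)
    _ ≤ ∑' v, ∑' u : {u // E v u}, C * ‖f u * μ u‖₊ :=
        ENNReal.tsum_le_tsum fun v => ENNReal.tsum_le_tsum fun u => hterm v u u.2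
    _ ≤ C * ∑' w, (‖f w * μ w‖₊ : ℝ≥0∞) := by
        simp_rw [ENNReal.tsum_mul_left]
        exact mul_le_mul_right (tsum_tsum_children_le_tsum hE _) C

end UniqueParent

lemma bop_single_of_edge {V 𝕜 : Type*} [RCLike 𝕜] [DecidableEq V] {E : V → V → Prop}
    {u v : V} (h : E u v) : Bop E (Pi.single v 1 : V → 𝕜) u = 1 := by
  rw [Bop, tsum_eq_single (⟨v, h⟩ : {x // E u x})]
  · simp
  · rintro ⟨x, hx⟩ hne
    exact Pi.single_eq_of_ne (fun hxv => hne (Subtype.ext hxv)) _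

lemma div_le_of_pnorm_one_bop_le {V 𝕜 : Type*} [RCLike 𝕜] {E : V → V → Prop} {μ : V → 𝕜}
    {C : ℝ≥0∞} (hC : ∀ f : V → 𝕜, pnorm μ 1 (Bop E f) ≤ C * pnorm μ 1 f)
    {u v : V} (hv : μ v ≠ 0) (h : E u v) : (‖μ u‖₊ : ℝ≥0∞) / ‖μ v‖₊ ≤ C := by
  classical
  have hμv : (‖μ v‖₊ : ℝ≥0∞) ≠ 0 := by simpa using hv
  refine (ENNReal.div_le_iff hμv ENNReal.coe_ne_top).mpr ?_
  calc (‖μ u‖₊ : ℝ≥0∞)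
      = ‖Bop E (Pi.single v 1 : V → 𝕜) u * μ u‖₊ := by rw [bop_single_of_edge h, one_mul]
    _ ≤ pnorm μ 1 (Bop E (Pi.single v 1)) := by
        rw [pnorm_one_eq]
        exact ENNReal.le_tsum u
    _ ≤ C * pnorm μ 1 (Pi.single v 1) := hC _
    _ = C * ‖μ v‖₊ := by
        rw [pnorm_one_eq, tsum_eq_single v fun w hw => by simp [Pi.single_eq_of_ne hw]]
        simp

theorem stmt9_general {V 𝕜 : Type*} [RCLike 𝕜]
    {E : V → V → Prop} (hT : DirTree E) (μ : V → 𝕜) (hμ : ∀ v, μ v ≠ 0) :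
    ((∃ C : ℝ≥0∞, C ≠ ⊤ ∧ ∀ f : V → 𝕜, pnorm μ 1 (Bop E f) ≤ C * pnorm μ 1 f) ↔
      (⨆ (v : V) (u : V) (_ : E u v), (‖μ u‖₊ : ℝ≥0∞) / ‖μ v‖₊) ≠ ⊤) ∧
    sInf {C : ℝ≥0∞ | ∀ f : V → 𝕜, pnorm μ 1 (Bop E f) ≤ C * pnorm μ 1 f}
      = ⨆ (v : V) (u : V) (_ : E u v), (‖μ u‖₊ : ℝ≥0∞) / ‖μ v‖₊ := by
  set S : ℝ≥0∞ := ⨆ (v : V) (u : V) (_ : E u v), (‖μ u‖₊ : ℝ≥0∞) / ‖μ v‖₊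
  have hupper : ∀ f : V → 𝕜, pnorm μ 1 (Bop E f) ≤ S * pnorm μ 1 f :=
    pnorm_one_bop_le hT.uniqueParent hμ fun u v h => le_iSup₂_of_le v u (le_iSup_of_le h le_rfl)
  have hlower : ∀ C, (∀ f : V → 𝕜, pnorm μ 1 (Bop E f) ≤ C * pnorm μ 1 f) → S ≤ C :=
    fun C hC => iSup₂_le fun v _ => iSup_le fun h => div_le_of_pnorm_one_bop_le hC (hμ v) h
  exact ⟨⟨fun ⟨C, hCt, hC⟩ => ne_top_of_le_ne_top hCt (hlower C hC), fun hS => ⟨S, hS, hupper⟩⟩,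
    le_antisymm (sInf_le hupper) (le_sInf hlower)⟩

/-- Boundedness of the backward shift on `ℓ¹(V,μ)`: `B` is bounded iff
`sup_{v non-root} |μ_{par(v)}/μ_v| < ∞`, in which case its operator norm equals
this supremum.  (Here the supremum over pairs `u, v` with `E u v`, i.e. `u`
the parent of `v`, is the same supremum.) -/
theorem stmt9 {V 𝕜 : Type*} [RCLike 𝕜] [Countable V] [Nonempty V]
    {E : V → V → Prop} (hT : DirTree E) (μ : V → 𝕜) (hμ : ∀ v, μ v ≠ 0) :
    ((∃ C : ℝ≥0∞, C ≠ ⊤ ∧ ∀ f : V → 𝕜, pnorm μ 1 (Bop E f) ≤ C * pnorm μ 1 f) ↔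
      (⨆ (v : V) (u : V) (_ : E u v), (‖μ u‖₊ : ℝ≥0∞) / ‖μ v‖₊) ≠ ⊤) ∧
    sInf {C : ℝ≥0∞ | ∀ f : V → 𝕜, pnorm μ 1 (Bop E f) ≤ C * pnorm μ 1 f}
      = ⨆ (v : V) (u : V) (_ : E u v), (‖μ u‖₊ : ℝ≥0∞) / ‖μ v‖₊ :=
  stmt9_general hT μ hμ
end

section
/- Let $(V,E)$ be a directed tree, $\mu$ a weight of nonzero scalars, $1<p<\infty$ with conjugate exponent $p^*$, and $B$ the backward shift $(Bf)(v)=\sum_{u\in\mathrm{Chi}(v)}f(u)$. Then $B$ is a bounded operator on $\ell^p(V,\mu)$ if and only if $\sup_{v\in V}\sum_{u\in\mathrm{Chi}(v)}|\mu_v/\mu_u|^{p^*}<+\infty$, and in that case $\|B\|=\sup_{v\in V}(\sum_{u\in\mathrm{Chi}(v)}|\mu_v/\mu_u|^{p^*})^{1/p^*}$. -/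
open scoped ENNReal NNReal

/-! The upper bound is Hölder's inequality at each vertex `v`: with `p*` the conjugate
exponent, `|(Bf)(v) μ_v| ≤ ∑_{u ∈ Chi(v)} |f(u) μ_u| |μ_v / μ_u|` is at most
`(∑_{u ∈ Chi(v)} |f(u) μ_u|^p)^{1/p} (∑_{u ∈ Chi(v)} |μ_v/μ_u|^{p*})^{1/p*}`, and since every
vertex has at most one parent the sets `Chi(v)` are disjoint, so summing the `p`-th powers over
`v` gives `‖Bf‖ ≤ K ‖f‖` with `K` the supremum in the statement. For the lower bound, the
function `|μ_u|^{-p*}` on a finite set of children of `v` (and `0` elsewhere) is the equality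
case of that Hölder inequality, and testing `B` against it recovers the finite partial sums of
`∑_{u ∈ Chi(v)} |μ_v/μ_u|^{p*}`. -/

theorem ENNReal.inner_le_Lp_mul_Lq_tsum {ι : Type*} {p q : ℝ} (hpq : p.HolderConjugate q)
    (f g : ι → ℝ≥0∞) :
    ∑' i, f i * g i ≤ (∑' i, f i ^ p) ^ (1 / p) * (∑' i, g i ^ q) ^ (1 / q) := by
  rw [ENNReal.tsum_eq_iSup_sum]
  refine iSup_le fun s => (ENNReal.inner_le_Lp_mul_Lq s f g hpq).trans ?_
  exact mul_le_mul' (ENNReal.rpow_le_rpow (ENNReal.sum_le_tsum s) hpq.one_div_nonneg)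
    (ENNReal.rpow_le_rpow (ENNReal.sum_le_tsum s) hpq.symm.one_div_nonneg)

theorem ENNReal.mul_rpow_le_rpow_of_mul_le_mul_rpow {p q : ℝ} (hpq : p.HolderConjugate q)
    {T M C : ℝ≥0∞} (hT₀ : T ≠ 0) (hT : T ≠ ⊤) (h : T * M ≤ C * T ^ (1 / p)) :
    T * M ^ q ≤ C ^ q := by
  have hsplit : T = T ^ (1 / p) * T ^ (1 / q) := by
    rw [← ENNReal.rpow_add _ _ hT₀ hT, one_div, one_div, hpq.inv_add_inv_eq_one,
      ENNReal.rpow_one]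
  have hcancel : T ^ (1 / q) * M ≤ C := by
    refine (ENNReal.mul_le_mul_iff_right (ENNReal.rpow_pos (pos_iff_ne_zero.2 hT₀) hT).ne'
      (ENNReal.rpow_ne_top_of_nonneg hpq.one_div_nonneg hT)).1 ?_
    rw [← mul_assoc, ← hsplit, mul_comm _ C]
    exact h
  calc T * M ^ q = (T ^ (1 / q) * M) ^ q := by
        rw [ENNReal.mul_rpow_of_nonneg _ _ hpq.symm.nonneg, one_div,
          ENNReal.rpow_inv_rpow hpq.symm.ne_zero]
    _ ≤ C ^ q := ENNReal.rpow_le_rpow hcancel hpq.symm.nonneg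

theorem NNReal.rpow_neg_mul_self_rpow {p q : ℝ} (hpq : p.HolderConjugate q) {m : ℝ≥0}
    (hm : m ≠ 0) : (m ^ (-q) * m) ^ p = m ^ (-q) := by
  rw [← NNReal.rpow_add_one hm, ← NNReal.rpow_mul]
  congr 1
  linear_combination -hpq.mul_eq_add

section BackwardShift

variable {V 𝕜 : Type*} [RCLike 𝕜] {E : V → V → Prop}

noncomputable def childWeightSum (E : V → V → Prop) (μ : V → 𝕜) (q : ℝ) (v : V) : ℝ≥0∞ :=
  ∑' u : {u // E v u}, ((‖μ v‖₊ : ℝ≥0∞) / ‖μ u.1‖₊) ^ q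

theorem tsum_tsum_children_le (hpar : ∀ v u₁ u₂ : V, E u₁ v → E u₂ v → u₁ = u₂)
    (g : V → ℝ≥0∞) : ∑' v, ∑' u : {u // E v u}, g u ≤ ∑' u, g u := by
  have hinj : Function.Injective fun x : Σ v, {u // E v u} => x.2.1 := by
    rintro ⟨v, u, hu⟩ ⟨w, _, hu'⟩ rfl
    obtain rfl := hpar u v w hu hu'
    rfl
  calc ∑' v, ∑' u : {u // E v u}, g u = ∑' x : Σ v, {u // E v u}, g x.2.1 :=
        (ENNReal.tsum_sigma' fun x : Σ v, {u // E v u} => g x.2.1).symm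
    _ ≤ ∑' u, g u := ENNReal.tsum_comp_le_tsum_of_injective hinj g

theorem enorm_Bop_mul_le {μ : V → 𝕜} (hμ : ∀ v, μ v ≠ 0) (f : V → 𝕜) (v : V) :
    (‖Bop E f v * μ v‖₊ : ℝ≥0∞) ≤
      ∑' u : {u // E v u}, ‖f u * μ u‖₊ * ((‖μ v‖₊ : ℝ≥0∞) / ‖μ u.1‖₊) := by
  calc (‖Bop E f v * μ v‖₊ : ℝ≥0∞) = ‖Bop E f v‖ₑ * ‖μ v‖₊ := by
        rw [nnnorm_mul, ENNReal.coe_mul]; rfl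
    _ ≤ (∑' u : {u // E v u}, ‖f u‖ₑ) * ‖μ v‖₊ := by gcongr; exact enorm_tsum_le_tsum_enorm
    _ = ∑' u : {u // E v u}, ‖f u * μ u‖₊ * ((‖μ v‖₊ : ℝ≥0∞) / ‖μ u.1‖₊) := by
        rw [← ENNReal.tsum_mul_right]
        refine tsum_congr fun u => ?_
        rw [nnnorm_mul, ENNReal.coe_mul, mul_assoc, ENNReal.mul_div_cancel
          (by simpa using hμ u.1) ENNReal.coe_ne_top]
        rfl

theorem pnorm_Bop_le (hpar : ∀ v u₁ u₂ : V, E u₁ v → E u₂ v → u₁ = u₂) {μ : V → 𝕜}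
    (hμ : ∀ v, μ v ≠ 0) {p q : ℝ} (hpq : p.HolderConjugate q) (f : V → 𝕜) :
    pnorm μ p (Bop E f) ≤ (⨆ v, childWeightSum E μ q v ^ (1 / q)) * pnorm μ p f := by
  set K := ⨆ v, childWeightSum E μ q v ^ (1 / q)
  set a : V → ℝ≥0∞ := fun u => ‖f u * μ u‖₊
  have hp := hpq.pos
  have pointwise (v : V) :
      (‖Bop E f v * μ v‖₊ : ℝ≥0∞) ^ p ≤ (∑' u : {u // E v u}, a u ^ p) * K ^ p := by
    have hHolder : (‖Bop E f v * μ v‖₊ : ℝ≥0∞) ≤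
        (∑' u : {u // E v u}, a u ^ p) ^ (1 / p) * K :=
      (enorm_Bop_mul_le hμ f v).trans <| (ENNReal.inner_le_Lp_mul_Lq_tsum hpq _ _).trans <|
        by gcongr; exact le_iSup (fun v => childWeightSum E μ q v ^ (1 / q)) v
    calc (‖Bop E f v * μ v‖₊ : ℝ≥0∞) ^ p
        ≤ ((∑' u : {u // E v u}, a u ^ p) ^ (1 / p) * K) ^ p := by gcongr
      _ = (∑' u : {u // E v u}, a u ^ p) * K ^ p := by
        rw [ENNReal.mul_rpow_of_nonneg _ _ hp.le, one_div, ENNReal.rpow_inv_rpow hp.ne']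
  have hsum : ∑' v, (‖Bop E f v * μ v‖₊ : ℝ≥0∞) ^ p ≤ (∑' u, a u ^ p) * K ^ p :=
    calc ∑' v, (‖Bop E f v * μ v‖₊ : ℝ≥0∞) ^ p
        ≤ ∑' v, (∑' u : {u // E v u}, a u ^ p) * K ^ p := ENNReal.tsum_le_tsum pointwise
      _ = (∑' v, ∑' u : {u // E v u}, a u ^ p) * K ^ p := ENNReal.tsum_mul_right
      _ ≤ (∑' u, a u ^ p) * K ^ p := mul_le_mul_left (tsum_tsum_children_le hpar _) _
  calc pnorm μ p (Bop E f) ≤ ((∑' u, a u ^ p) * K ^ p) ^ (1 / p) := by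
        unfold pnorm; gcongr
    _ = K * pnorm μ p f := by
        rw [ENNReal.mul_rpow_of_nonneg _ _ (by positivity), one_div p,
          ENNReal.rpow_rpow_inv hp.ne', mul_comm, ← one_div]
        rfl

theorem enorm_mul_le_pnorm (μ : V → 𝕜) {p : ℝ} (hp : 0 < p) (f : V → 𝕜) (v : V) :
    (‖f v * μ v‖₊ : ℝ≥0∞) ≤ pnorm μ p f := by
  calc (‖f v * μ v‖₊ : ℝ≥0∞) = ((‖f v * μ v‖₊ : ℝ≥0∞) ^ p) ^ (1 / p) := by
        rw [one_div, ENNReal.rpow_rpow_inv hp.ne']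
    _ ≤ pnorm μ p f := by unfold pnorm; gcongr; exact ENNReal.le_tsum v

open Classical in
noncomputable def childTestFn (μ : V → 𝕜) (q : ℝ) {v : V} (s : Finset {u // E v u}) : V → 𝕜 :=
  fun u => if u ∈ s.map (.subtype _) then algebraMap ℝ≥0 𝕜 (‖μ u‖₊ ^ (-q)) else 0

open Classical in
theorem childTestFn_child (μ : V → 𝕜) (q : ℝ) {v : V} (s : Finset {u // E v u})
    (u : {u // E v u}) :
    childTestFn μ q s u = if u ∈ s then algebraMap ℝ≥0 𝕜 (‖μ u‖₊ ^ (-q)) else 0 :=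
  if_congr (Finset.mem_map' (.subtype _)) rfl rfl

theorem Bop_childTestFn_self (μ : V → 𝕜) (q : ℝ) {v : V} (s : Finset {u // E v u}) :
    Bop E (childTestFn μ q s) v = algebraMap ℝ≥0 𝕜 (∑ u ∈ s, ‖μ u‖₊ ^ (-q)) := by
  rw [Bop, tsum_eq_sum (s := s) fun u hu => by rw [childTestFn_child, if_neg hu], map_sum]
  exact Finset.sum_congr rfl fun u hu => by rw [childTestFn_child, if_pos hu]

theorem pnorm_childTestFn {μ : V → 𝕜} (hμ : ∀ v, μ v ≠ 0) {p q : ℝ} (hpq : p.HolderConjugate q)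
    {v : V} (s : Finset {u // E v u}) :
    pnorm μ p (childTestFn μ q s) = ((∑ u ∈ s, ‖μ u‖₊ ^ (-q) : ℝ≥0) : ℝ≥0∞) ^ (1 / p) := by
  have hzero (w : V) (hw : w ∉ s.map (.subtype _)) :
      (‖childTestFn μ q s w * μ w‖₊ : ℝ≥0∞) ^ p = 0 := by
    simp [childTestFn, hw, hpq.pos]
  rw [pnorm, tsum_eq_sum hzero, Finset.sum_map, ENNReal.ofNNReal_finsetSum]
  congr 1
  refine Finset.sum_congr rfl fun u hu => ?_
  rw [Function.Embedding.coe_subtype, childTestFn_child, if_pos hu, nnnorm_mul,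
    nnnorm_algebraMap_nnreal, ← ENNReal.coe_rpow_of_nonneg _ hpq.nonneg,
    NNReal.rpow_neg_mul_self_rpow hpq (by simpa using hμ u.1)]

theorem childWeightSum_le_of_pnorm_Bop_le {μ : V → 𝕜} (hμ : ∀ v, μ v ≠ 0) {p q : ℝ}
    (hpq : p.HolderConjugate q) {C : ℝ≥0∞}
    (hC : ∀ f : V → 𝕜, pnorm μ p (Bop E f) ≤ C * pnorm μ p f) (v : V) :
    childWeightSum E μ q v ≤ C ^ q := by
  rw [childWeightSum, ENNReal.tsum_eq_iSup_sum]
  refine iSup_le fun s => ?_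
  rcases s.eq_empty_or_nonempty with rfl | ⟨u₀, hu₀⟩
  · simp
  set T : ℝ≥0 := ∑ u ∈ s, ‖μ u‖₊ ^ (-q)
  have hT : T ≠ 0 := by
    refine (Finset.sum_pos (fun u _ => ?_) ⟨u₀, hu₀⟩).ne'
    exact NNReal.rpow_pos (by simpa using hμ u.1)
  have htest : (T : ℝ≥0∞) * ‖μ v‖₊ ≤ C * (T : ℝ≥0∞) ^ (1 / p) := by
    calc (T : ℝ≥0∞) * ‖μ v‖₊ = ‖Bop E (childTestFn μ q s) v * μ v‖₊ := by
          rw [Bop_childTestFn_self, nnnorm_mul, nnnorm_algebraMap_nnreal, ENNReal.coe_mul]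
      _ ≤ pnorm μ p (Bop E (childTestFn μ q s)) := enorm_mul_le_pnorm μ hpq.pos _ v
      _ ≤ C * (T : ℝ≥0∞) ^ (1 / p) := (hC _).trans_eq (by rw [pnorm_childTestFn hμ hpq])
  calc ∑ u ∈ s, ((‖μ v‖₊ : ℝ≥0∞) / ‖μ u.1‖₊) ^ q = T * (‖μ v‖₊ : ℝ≥0∞) ^ q := by
        rw [ENNReal.ofNNReal_finsetSum, Finset.sum_mul]
        refine Finset.sum_congr rfl fun u _ => ?_
        rw [ENNReal.div_rpow_of_nonneg _ _ hpq.symm.nonneg, div_eq_mul_inv, mul_comm,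
          ENNReal.coe_rpow_of_ne_zero (by simpa using hμ u.1), ENNReal.rpow_neg]
    _ ≤ C ^ q :=
      ENNReal.mul_rpow_le_rpow_of_mul_le_mul_rpow hpq (by simpa) ENNReal.coe_ne_top htest

end BackwardShift

theorem stmt10_general {V 𝕜 : Type*} [RCLike 𝕜]
    {E : V → V → Prop} (hT : DirTree E) (μ : V → 𝕜) (hμ : ∀ v, μ v ≠ 0)
    (p : ℝ) (hp : 1 < p) :
    ((∃ C : ℝ≥0∞, C ≠ ⊤ ∧ ∀ f : V → 𝕜, pnorm μ p (Bop E f) ≤ C * pnorm μ p f) ↔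
      (⨆ v : V, ∑' u : {u // E v u}, ((‖μ v‖₊ : ℝ≥0∞) / ‖μ u.1‖₊) ^ (p / (p - 1))) ≠ ⊤) ∧
    sInf {C : ℝ≥0∞ | ∀ f : V → 𝕜, pnorm μ p (Bop E f) ≤ C * pnorm μ p f}
      = ⨆ v : V, (∑' u : {u // E v u},
          ((‖μ v‖₊ : ℝ≥0∞) / ‖μ u.1‖₊) ^ (p / (p - 1))) ^ (1 / (p / (p - 1))) := by
  have hpq : p.HolderConjugate (p / (p - 1)) := .conjExponent hp
  have hq := hpq.symm.nonneg
  have hq' := hpq.symm.one_div_nonneg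
  have hupper := pnorm_Bop_le hT.uniqueParent hμ hpq
  have hlower (C : ℝ≥0∞) (hC : ∀ f : V → 𝕜, pnorm μ p (Bop E f) ≤ C * pnorm μ p f) :=
    childWeightSum_le_of_pnorm_Bop_le hμ hpq hC
  refine ⟨⟨fun ⟨C, hC, hCB⟩ => ?_, fun h => ⟨_, ?_, hupper⟩⟩,
    le_antisymm (sInf_le hupper) (le_sInf fun C hC => iSup_le fun v => ?_)⟩
  · exact ne_top_of_le_ne_top (ENNReal.rpow_ne_top_of_nonneg hq hC) (iSup_le (hlower C hCB))
  · refine ne_top_of_le_ne_top (ENNReal.rpow_ne_top_of_nonneg hq' h) (iSup_le fun v => ?_)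
    exact ENNReal.rpow_le_rpow (le_iSup (childWeightSum E μ _) v) hq'
  · calc childWeightSum E μ _ v ^ (1 / (p / (p - 1)))
        ≤ (C ^ (p / (p - 1))) ^ (1 / (p / (p - 1))) := ENNReal.rpow_le_rpow (hlower C hC v) hq'
      _ = C := by rw [one_div, ENNReal.rpow_rpow_inv hpq.symm.ne_zero]

/-- Boundedness of the backward shift on `ℓ^p(V,μ)`, `1 < p < ∞`:
`B` is bounded iff `sup_v ∑_{u ∈ Chi(v)} |μ_v/μ_u|^{p*} < ∞`, and in that case
`‖B‖ = sup_v (∑_{u ∈ Chi(v)} |μ_v/μ_u|^{p*})^{1/p*}` where `p* = p/(p-1)`. -/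
theorem stmt10 {V 𝕜 : Type*} [RCLike 𝕜] [Countable V] [Nonempty V]
    {E : V → V → Prop} (hT : DirTree E) (μ : V → 𝕜) (hμ : ∀ v, μ v ≠ 0)
    (p : ℝ) (hp : 1 < p) :
    ((∃ C : ℝ≥0∞, C ≠ ⊤ ∧ ∀ f : V → 𝕜, pnorm μ p (Bop E f) ≤ C * pnorm μ p f) ↔
      (⨆ v : V, ∑' u : {u // E v u}, ((‖μ v‖₊ : ℝ≥0∞) / ‖μ u.1‖₊) ^ (p / (p - 1))) ≠ ⊤) ∧
    sInf {C : ℝ≥0∞ | ∀ f : V → 𝕜, pnorm μ p (Bop E f) ≤ C * pnorm μ p f}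
      = ⨆ v : V, (∑' u : {u // E v u},
          ((‖μ v‖₊ : ℝ≥0∞) / ‖μ u.1‖₊) ^ (p / (p - 1))) ^ (1 / (p / (p - 1))) :=
  stmt10_general hT μ hμ p hp
end

section
/- Let $(V,E)$ be a rooted directed tree, $\mu$ a weight, $1<p<\infty$, and suppose the backward shift $B$ is bounded on $\ell^p(V,\mu)$. If some orbit of $B$ has a nonzero weak limit point, then there exist a vertex $v_0\in V$ and an increasing sequence $(n_k)$ of positive integers such that $\sum_{u\in\mathrm{Chi}^{n_k}(v_0)}|\mu_u|^{-p^*}\to+\infty$ as $k\to\infty$. -/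
open scoped ENNReal NNReal

/-- `chiIter E n v` is `Chi^n(v)`, the set of `n`-th generation descendants of `v`. -/
def chiIter {V : Type*} (E : V → V → Prop) : ℕ → V → Set V
  | 0, v => {v}
  | n + 1, v => {u | ∃ w, E v w ∧ u ∈ chiIter E n w}

open Filter

/-!
Test the weak convergence against the point evaluation at a vertex `v₀` with `g v₀ ≠ 0`:
`(B^{n_k} f)(v₀) → g(v₀)`. Since `|(B^m f)(v₀)| ≤ ∑_{Chi^m(v₀)} |f|`, Hölder's inequality with
the weight `μ` eventually gives `|g(v₀)| / 2 ≤ A_k^{1/p} S_k^{1/p*}`, where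
`A_k = ∑_{Chi^{n_k}(v₀)} |f μ|^p` and `S_k = ∑_{Chi^{n_k}(v₀)} |μ|^{-p*}`. The generations
`Chi^{n_k}(v₀)` are pairwise disjoint, because every vertex has a unique depth below the root,
so `∑_k A_k ≤ ‖f‖_p^p < ∞`. Hence `A_k → 0`, which forces `S_k → ∞`.
-/

open Topology MeasureTheory

namespace ENNReal

theorem tsum_mul_le_Lp_mul_Lq_s14 {ι : Type*} (F G : ι → ℝ≥0∞) {p q : ℝ}
    (hpq : p.HolderConjugate q) :
    ∑' i, F i * G i ≤ (∑' i, F i ^ p) ^ (1 / p) * (∑' i, G i ^ q) ^ (1 / q) := by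
  let _ : MeasurableSpace ι := ⊤
  simpa only [lintegral_count, Pi.mul_apply] using
    lintegral_mul_le_Lp_mul_Lq (Measure.count : Measure ι) hpq
      (measurable_from_top (f := F)).aemeasurable (measurable_from_top (f := G)).aemeasurable

theorem tendsto_nhds_top_of_le_rpow_mul_rpow {α : Type*} {l : Filter α} {a b : α → ℝ≥0∞}
    {c : ℝ≥0∞} {r s : ℝ} (hc : c ≠ 0) (hr : 0 < r) (hs : 0 < s)
    (ha : Tendsto a l (𝓝 0)) (h : ∀ᶠ x in l, c ≤ a x ^ r * b x ^ s) :
    Tendsto b l (𝓝 ⊤) := by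
  have har : Tendsto (fun x => a x ^ r) l (𝓝 0) := by
    simpa [Function.comp_def, zero_rpow_of_pos hr] using
      (continuous_rpow_const (y := r)).tendsto 0 |>.comp ha
  have hbs : Tendsto (fun x => b x ^ s) l (𝓝 ⊤) := by
    refine tendsto_nhds_top_mono ?_ (h.mono fun x hx => div_le_of_le_mul' hx)
    simpa [div_zero hc] using ENNReal.Tendsto.const_div (a := c) har (Or.inl zero_ne_top)
  simpa [Function.comp_def, ← rpow_mul, mul_inv_cancel₀ hs.ne',
    top_rpow_of_pos (inv_pos.2 hs)] using
    (continuous_rpow_const (y := s⁻¹)).tendsto ⊤ |>.comp hbs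

end ENNReal

section chiIter

variable {V : Type*} {E : V → V → Prop}

theorem mem_chiIter_succ_iff' {m : ℕ} {v w : V} :
    w ∈ chiIter E (m + 1) v ↔ ∃ x ∈ chiIter E m v, E x w := by
  induction m generalizing v with
  | zero => simp [chiIter]
  | succ m ih =>
    constructor
    · rintro ⟨u, hvu, hw⟩
      obtain ⟨x, hx, hxw⟩ := ih.1 hw
      exact ⟨x, ⟨u, hvu, hx⟩, hxw⟩
    · rintro ⟨x, ⟨u, hvu, hx⟩, hxw⟩
      exact ⟨u, hvu, ih.2 ⟨x, hx, hxw⟩⟩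

theorem mem_chiIter_add {a b : ℕ} {v u w : V} (hu : u ∈ chiIter E a v)
    (hw : w ∈ chiIter E b u) : w ∈ chiIter E (a + b) v := by
  induction a generalizing v with
  | zero => simpa [chiIter, show u = v from hu] using hw
  | succ a ih =>
    obtain ⟨x, hvx, hx⟩ := hu
    rw [Nat.add_right_comm]
    exact ⟨x, hvx, ih hx⟩

namespace DirTree

variable (hT : DirTree E)
include hT

theorem eq_of_mem_chiIter {m : ℕ} {u₁ u₂ w : V} (h₁ : w ∈ chiIter E m u₁)
    (h₂ : w ∈ chiIter E m u₂) : u₁ = u₂ := by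
  induction m generalizing w with
  | zero => exact h₁.symm.trans h₂
  | succ m ih =>
    obtain ⟨x₁, hx₁, hE₁⟩ := mem_chiIter_succ_iff'.1 h₁
    obtain ⟨x₂, hx₂, hE₂⟩ := mem_chiIter_succ_iff'.1 h₂
    obtain rfl := hT.uniqueParent w x₁ x₂ hE₁ hE₂
    exact ih hx₁ hx₂

theorem depth_eq_of_mem_chiIter {o : V} (ho : ∀ u, ¬ E u o) :
    ∀ {m₁ m₂ : ℕ} {w : V}, w ∈ chiIter E m₁ o → w ∈ chiIter E m₂ o → m₁ = m₂
  | 0, 0, _, _, _ => rfl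
  | 0, _ + 1, _, rfl, h₂ | _ + 1, 0, _, h₂, rfl => by
    obtain ⟨x, -, hx⟩ := mem_chiIter_succ_iff'.1 h₂
    exact absurd hx (ho x)
  | _ + 1, _ + 1, w, h₁, h₂ => by
    obtain ⟨x₁, hx₁, hE₁⟩ := mem_chiIter_succ_iff'.1 h₁
    obtain ⟨x₂, hx₂, hE₂⟩ := mem_chiIter_succ_iff'.1 h₂
    obtain rfl := hT.uniqueParent w x₁ x₂ hE₁ hE₂
    rw [depth_eq_of_mem_chiIter ho hx₁ hx₂]

theorem tsum_chiIter_succ (v : V) (m : ℕ) (h : V → ℝ≥0∞) :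
    ∑' w : chiIter E (m + 1) v, h w = ∑' u : {u // E v u}, ∑' w : chiIter E m u, h w := by
  let e : (Σ u : {u // E v u}, chiIter E m u) → chiIter E (m + 1) v :=
    fun x => ⟨x.2, x.1, x.1.2, x.2.2⟩
  have he : Function.Bijective e := by
    refine ⟨?_, fun ⟨w, u, hu, hw⟩ => ⟨⟨⟨u, hu⟩, ⟨w, hw⟩⟩, rfl⟩⟩
    rintro ⟨⟨u₁, hu₁⟩, w₁, hw₁⟩ ⟨⟨u₂, hu₂⟩, w₂, hw₂⟩ heq
    obtain rfl : w₁ = w₂ := congrArg Subtype.val heq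
    obtain rfl := hT.eq_of_mem_chiIter hw₁ hw₂
    rfl
  calc ∑' w : chiIter E (m + 1) v, h w
      = ∑' x : Σ u : {u // E v u}, chiIter E m u, h (e x) :=
        ((Equiv.ofBijective e he).tsum_eq fun w => h w).symm
    _ = _ := ENNReal.tsum_sigma' _

theorem tsum_tsum_chiIter_le {o v : V} {d : ℕ} (ho : ∀ u, ¬ E u o) (hv : v ∈ chiIter E d o)
    {n : ℕ → ℕ} (hn : Function.Injective n) (h : V → ℝ≥0∞) :
    ∑' k, ∑' u : chiIter E (n k) v, h u ≤ ∑' u, h u := by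
  have hinj : Function.Injective fun x : Σ k, chiIter E (n k) v => x.2.1 := by
    rintro ⟨k₁, w, hw₁⟩ ⟨k₂, _, hw₂⟩ rfl
    have := hT.depth_eq_of_mem_chiIter ho (mem_chiIter_add hv hw₁) (mem_chiIter_add hv hw₂)
    obtain rfl := hn (Nat.add_left_cancel this)
    rfl
  exact (ENNReal.tsum_sigma' fun x : Σ k, chiIter E (n k) v => h x.2).symm.trans_le
    (ENNReal.tsum_comp_le_tsum_of_injective hinj h)

theorem enorm_iterate_Bop_apply_le {𝕜 : Type*} [RCLike 𝕜] (f : V → 𝕜) (m : ℕ) (v : V) :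
    ‖(Bop E)^[m] f v‖ₑ ≤ ∑' u : chiIter E m v, ‖f u‖ₑ := by
  induction m generalizing v with
  | zero => simp [chiIter]
  | succ m ih =>
    rw [Function.iterate_succ_apply', hT.tsum_chiIter_succ v m (‖f ·‖ₑ)]
    exact enorm_tsum_le_tsum_enorm.trans (ENNReal.tsum_le_tsum fun u => ih u)

end DirTree

end chiIter

theorem tsum_enorm_le_Lp_mul_Lq_of_weight {ι 𝕜 : Type*} [RCLike 𝕜] (f μ : ι → 𝕜)
    (hμ : ∀ i, μ i ≠ 0) {p q : ℝ} (hpq : p.HolderConjugate q) :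
    ∑' i, ‖f i‖ₑ ≤
      (∑' i, ‖f i * μ i‖ₑ ^ p) ^ (1 / p) * (∑' i, ‖μ i‖ₑ ^ (-q)) ^ (1 / q) := by
  have hfactor : ∀ i, ‖f i‖ₑ = ‖f i * μ i‖ₑ * ‖μ i‖ₑ⁻¹ := fun i => by
    rw [enorm_mul, mul_assoc, ENNReal.mul_inv_cancel (by simpa using hμ i) enorm_ne_top,
      mul_one]
  simpa only [← hfactor, ENNReal.inv_rpow, ENNReal.rpow_neg] using
    ENNReal.tsum_mul_le_Lp_mul_Lq_s14 (fun i => ‖f i * μ i‖ₑ) (fun i => ‖μ i‖ₑ⁻¹) hpq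

theorem tsum_rpow_ne_top_of_pnorm_ne_top {V 𝕜 : Type*} [RCLike 𝕜] {μ f : V → 𝕜} {p : ℝ}
    (hp : 0 < p) (h : pnorm μ p f ≠ ⊤) : ∑' v, ‖f v * μ v‖ₑ ^ p ≠ ⊤ := fun htop =>
  h <| by rw [pnorm]; simp [enorm_eq_nnnorm] at htop; simp [htop, hp]

theorem tendsto_apply_of_forall_tendsto_tsum_mul {V 𝕜 : Type*} [RCLike 𝕜] {μ : V → 𝕜}
    (hμ : ∀ v, μ v ≠ 0) {q : ℝ} (hq : 0 < q) {l : Filter ℕ} {F : ℕ → V → 𝕜} {g : V → 𝕜}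
    (h : ∀ φ : V → 𝕜, (∑' v, ((‖φ v‖₊ : ℝ≥0∞) / ‖μ v‖₊) ^ q) ≠ ⊤ →
      Tendsto (fun k => ∑' v, φ v * F k v) l (𝓝 (∑' v, φ v * g v))) (v : V) :
    Tendsto (fun k => F k v) l (𝓝 (g v)) := by
  classical
  have hpair : ∀ G : V → 𝕜, ∑' w, (Pi.single v 1 : V → 𝕜) w * G w = G v := fun G => by
    rw [tsum_eq_single v fun w hw => by simp [hw]]
    simp
  have hfinite : (∑' w, ((‖(Pi.single v 1 : V → 𝕜) w‖₊ : ℝ≥0∞) / ‖μ w‖₊) ^ q) ≠ ⊤ := by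
    rw [tsum_eq_single v fun w hw => by simp [hw, hq]]
    simp [hμ v]
  simpa only [hpair] using h _ hfinite

theorem stmt14_general {V 𝕜 : Type*} [RCLike 𝕜]
    {E : V → V → Prop} (hT : DirTree E) (μ : V → 𝕜) (hμ : ∀ w, μ w ≠ 0)
    (o : V) (ho : ∀ u, ¬ E u o) (hreach : ∀ w : V, ∃ m : ℕ, w ∈ chiIter E m o)
    (p : ℝ) (hp : 1 < p)
    (f g : V → 𝕜) (hf : pnorm μ p f ≠ ⊤) (hg0 : g ≠ 0)
    (n : ℕ → ℕ) (hmono : StrictMono n)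
    (hweak : ∀ φ : V → 𝕜,
      (∑' v, ((‖φ v‖₊ : ℝ≥0∞) / ‖μ v‖₊) ^ (p / (p - 1))) ≠ ⊤ →
      Tendsto (fun k => ∑' v, φ v * (Bop E)^[n k] f v) atTop
        (nhds (∑' v, φ v * g v))) :
    ∃ v₀ : V, ∃ N : ℕ → ℕ, StrictMono N ∧ (∀ k, 0 < N k) ∧
      Tendsto (fun k => ∑' u : chiIter E (N k) v₀,
        (‖μ u.1‖₊ : ℝ≥0∞) ^ (-(p / (p - 1)))) atTop (nhds ⊤) := by
  have hpq : p.HolderConjugate (p / (p - 1)) :=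
    (Real.holderConjugate_iff_eq_conjExponent hp).2 rfl
  obtain ⟨v₀, hv₀⟩ := Function.ne_iff.1 hg0
  obtain ⟨d, hd⟩ := hreach v₀
  have hmass : Tendsto (fun k => ∑' u : chiIter E (n k) v₀, ‖f u * μ u‖ₑ ^ p) atTop (𝓝 0) :=
    ENNReal.tendsto_atTop_zero_of_tsum_ne_top <|
      ne_top_of_le_ne_top (tsum_rpow_ne_top_of_pnorm_ne_top hpq.pos hf)
        (hT.tsum_tsum_chiIter_le ho hd hmono.injective _)
  have hlim := (tendsto_apply_of_forall_tendsto_tsum_mul hμ hpq.symm.pos hweak v₀).enorm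
  have hlower : ∀ᶠ k in atTop, ‖g v₀‖ₑ / 2 ≤
      (∑' u : chiIter E (n k) v₀, ‖f u * μ u‖ₑ ^ p) ^ (1 / p) *
      (∑' u : chiIter E (n k) v₀, ‖μ u‖ₑ ^ (-(p / (p - 1)))) ^ (1 / (p / (p - 1))) := by
    filter_upwards [hlim.eventually (lt_mem_nhds
      (ENNReal.half_lt_self (enorm_ne_zero.2 hv₀) enorm_ne_top))] with k hk
    exact hk.le.trans <| (hT.enorm_iterate_Bop_apply_le f (n k) v₀).trans <|
      tsum_enorm_le_Lp_mul_Lq_of_weight (fun u : chiIter E (n k) v₀ => f u) (μ ·) (hμ ·) hpq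
  have hS := ENNReal.tendsto_nhds_top_of_le_rpow_mul_rpow (by simpa using hv₀)
    (one_div_pos.2 hpq.pos) (one_div_pos.2 hpq.symm.pos) hmass hlower
  exact ⟨v₀, fun k => n (k + 1), hmono.comp (strictMono_id.add_const 1),
    fun k => (Nat.zero_le _).trans_lt (hmono k.succ_pos), hS.comp (tendsto_add_atTop_nat 1)⟩

/-- If some orbit of the backward shift on `ℓ^p` over a rooted directed tree has a
nonzero weak limit point (weak convergence tested against the dual
`ℓ^{p*}(V, 1/μ)` via the pairing `⟨f, φ⟩ = ∑_v f(v) φ(v)`), then there exist a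
vertex `v₀` and an increasing sequence `(n_k)` with
`∑_{u ∈ Chi^{n_k}(v₀)} |μ_u|^{-p*} → ∞`. -/
theorem stmt14 {V 𝕜 : Type*} [RCLike 𝕜] [Countable V] [Nonempty V]
    {E : V → V → Prop} (hT : DirTree E) (μ : V → 𝕜) (hμ : ∀ w, μ w ≠ 0)
    (o : V) (ho : ∀ u, ¬ E u o) (hreach : ∀ w : V, ∃ m : ℕ, w ∈ chiIter E m o)
    (p : ℝ) (hp : 1 < p)
    (hB : ∃ C : ℝ≥0∞, C ≠ ⊤ ∧ ∀ f : V → 𝕜, pnorm μ p (Bop E f) ≤ C * pnorm μ p f)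
    (f g : V → 𝕜) (hf : pnorm μ p f ≠ ⊤) (hg : pnorm μ p g ≠ ⊤) (hg0 : g ≠ 0)
    (n : ℕ → ℕ) (hmono : StrictMono n)
    (hweak : ∀ φ : V → 𝕜,
      (∑' v, ((‖φ v‖₊ : ℝ≥0∞) / ‖μ v‖₊) ^ (p / (p - 1))) ≠ ⊤ →
      Tendsto (fun k => ∑' v, φ v * (Bop E)^[n k] f v) atTop
        (nhds (∑' v, φ v * g v))) :
    ∃ v₀ : V, ∃ N : ℕ → ℕ, StrictMono N ∧ (∀ k, 0 < N k) ∧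
      Tendsto (fun k => ∑' u : chiIter E (N k) v₀,
        (‖μ u.1‖₊ : ℝ≥0∞) ^ (-(p / (p - 1)))) atTop (nhds ⊤) :=
  stmt14_general hT μ hμ o ho hreach p hp f g hf hg0 n hmono hweak
end

section
/- Let $X$ be an infinite-dimensional Banach space, $T$ a bounded linear operator on $X$, and $\mathcal{F}$ a Furstenberg family on $\mathbb{N}_0$ such that $\widetilde{\mathcal{F}}$ is a filter. Suppose there exist dense subsets $X_0,Y_0\subset X$ and maps $I_n:X_0\to X$, $S_n:Y_0\to X$ ($n\in\mathbb{N}_0$) such that for all $x\in X_0$, $y\in Y_0$: $\mathcal{F}\text{-}\lim_n (I_n x, T^n I_n x)=(x,0)$ and $\mathcal{F}\text{-}\lim_n (S_n y, T^n S_n y)=(0,y)$. Then $T$ is $\widetilde{\mathcal{F}}$-transitive. -/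
/-!
The `S`-maps force `T` to have dense range, so every `T ^ N (X₀)` and `T ^ N (Y₀)` is dense.
Given `N`, choose `x ∈ X₀` with `T ^ N x ∈ U`. For `F`-many `n`, `T ^ N (I n x) ∈ U` and
`T ^ n (I n x)` lies in the neighbourhood of `0` that every `T ^ j`, `j ≤ 2N`, maps into `W`;
as `T ^ m (T ^ N (I n x)) = T ^ (m + N - n) (T ^ n (I n x))`, every `m` with `|m - n| ≤ N` is in
`N(U, W)`. Symmetrically `T ^ (n + N - m) (S n y)` witnesses `m ∈ N(W, V)`. Writing
`U₁ + W₁ ⊆ U` and `W₂ + V₂ ⊆ V` with `W₁, W₂` neighbourhoods of `0`, the set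
`N(U₁, W₂) ∩ N(W₁, V₂) ⊆ N(U, V)` lies in the filter `Ftilde F`.
-/

open Set Filter

/-- `Ftilde F` is the family of sets `A ⊆ ℕ` such that for every `N` there is
`B ∈ F` with `(B + [-N, N]) ∩ ℕ ⊆ A`. -/
def Ftilde (F : Set (Set ℕ)) : Set (Set ℕ) :=
  {A | ∀ N : ℕ, ∃ B ∈ F, ∀ n ∈ B, ∀ m : ℕ, n ≤ m + N → m ≤ n + N → m ∈ A}

open Topology
open scoped Pointwise

theorem Ftilde_mono {F : Set (Set ℕ)} {A B : Set ℕ} (hA : A ∈ Ftilde F) (hAB : A ⊆ B) :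
    B ∈ Ftilde F := fun N =>
  (hA N).imp fun _ ⟨hC, h⟩ => ⟨hC, fun n hn m h₁ h₂ => hAB (h n hn m h₁ h₂)⟩

theorem exists_isOpen_add_subset {X : Type*} [TopologicalSpace X] [Add X] [ContinuousAdd X]
    {a b : X} {U : Set X} (hU : U ∈ 𝓝 (a + b)) :
    ∃ U₁ U₂ : Set X, IsOpen U₁ ∧ a ∈ U₁ ∧ IsOpen U₂ ∧ b ∈ U₂ ∧ U₁ + U₂ ⊆ U := by
  obtain ⟨U₁, U₂, hU₁, ha, hU₂, hb, hsub⟩ :=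
    mem_nhds_prod_iff'.mp (continuous_add.continuousAt (x := (a, b)) hU)
  refine ⟨U₁, U₂, hU₁, ha, hU₂, hb, ?_⟩
  rintro _ ⟨u₁, h₁, u₂, h₂, rfl⟩
  exact hsub (mk_mem_prod h₁ h₂)

namespace ContinuousLinearMap

variable {R X : Type*} [Semiring R] [TopologicalSpace X] [AddCommMonoid X] [Module R X]
  (T : X →L[R] X)

/-- The return set `N(U, V)` of `T`. -/
def returnSet (U V : Set X) : Set ℕ :=
  {n | ((T ^ n) '' U ∩ V).Nonempty}

theorem returnSet_inter_subset {U V U₁ W₁ W₂ V₂ : Set X} (hU : U₁ + W₁ ⊆ U) (hV : W₂ + V₂ ⊆ V) :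
    T.returnSet U₁ W₂ ∩ T.returnSet W₁ V₂ ⊆ T.returnSet U V := by
  rintro m ⟨⟨_, ⟨z, hz, rfl⟩, hzW⟩, ⟨_, ⟨u, hu, rfl⟩, huV⟩⟩
  exact ⟨_, mem_image_of_mem _ (hU (add_mem_add hz hu)), by
    rw [map_add]; exact hV (add_mem_add hzW huV)⟩

theorem pow_apply_pow_apply (a b : ℕ) (x : X) : (T ^ a) ((T ^ b) x) = (T ^ (a + b)) x := by
  rw [pow_add, _root_.mul_apply_eq_comp]

theorem denseRange_pow (hT : DenseRange T) (N : ℕ) : DenseRange (T ^ N) := by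
  induction N with
  | zero => simpa using denseRange_id
  | succ N ih => rw [pow_succ, FunLike.coe_mul_eq_comp]; exact ih.comp hT (T ^ N).continuous

theorem setOf_forall_pow_apply_mem_mem_nhds_zero {W : Set X} (hW : W ∈ 𝓝 0) (K : ℕ) :
    {v | ∀ j ≤ K, (T ^ j) v ∈ W} ∈ 𝓝 0 :=
  (eventually_all_finite (finite_le_nat K)).mpr fun j _ =>
    (T ^ j).continuous.continuousAt.preimage_mem_nhds (by rwa [map_zero])

theorem denseRange_of_pow_apply_mem {F : Set (Set ℕ)} (hFinf : ∀ A ∈ F, A.Infinite)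
    {Y₀ : Set X} (hY₀ : Dense Y₀) (S : ℕ → X → X)
    (hS : ∀ y ∈ Y₀, ∀ W ∈ 𝓝 y, {n | (T ^ n) (S n y) ∈ W} ∈ F) : DenseRange T := by
  have hsub : Y₀ ⊆ closure (range T) := fun y hy => mem_closure_iff_nhds.mpr fun W hW => by
    obtain ⟨n, hn, hn0⟩ := (hFinf _ (hS y hy W hW)).exists_gt 0
    obtain ⟨k, rfl⟩ := Nat.exists_eq_add_one_of_ne_zero hn0.ne'
    exact ⟨_, hn, (T ^ k) (S (k + 1) y), by rw [pow_succ', _root_.mul_apply_eq_comp]⟩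
  exact dense_closure.mp (hY₀.mono hsub)

variable {F : Set (Set ℕ)} (hT : DenseRange T)
include hT

theorem returnSet_mem_Ftilde_of_nhds_zero_right {X₀ : Set X} (hX₀ : Dense X₀) (I : ℕ → X → X)
    (hI : ∀ x ∈ X₀, ∀ W ∈ 𝓝 ((x, (0 : X)) : X × X), {n | (I n x, (T ^ n) (I n x)) ∈ W} ∈ F)
    {U W : Set X} (hU : IsOpen U) (hUne : U.Nonempty) (hW : W ∈ 𝓝 0) :
    T.returnSet U W ∈ Ftilde F := by
  intro N
  obtain ⟨_, hxU, x, hx, rfl⟩ :=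
    ((T.denseRange_pow hT N).dense_image (T ^ N).continuous hX₀).inter_open_nonempty U hU hUne
  refine ⟨_, hI x hx _ (prod_mem_nhds ((hU.preimage (T ^ N).continuous).mem_nhds hxU)
    (T.setOf_forall_pow_apply_mem_mem_nhds_zero hW (2 * N))), ?_⟩
  rintro n ⟨hn₁, hn₂⟩ m h₁ h₂
  refine ⟨_, mem_image_of_mem _ hn₁, ?_⟩
  rw [pow_apply_pow_apply, show m + N = (m + N - n) + n by omega, ← pow_apply_pow_apply]
  exact hn₂ _ (by omega)

theorem returnSet_mem_Ftilde_of_nhds_zero_left {Y₀ : Set X} (hY₀ : Dense Y₀) (S : ℕ → X → X)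
    (hS : ∀ y ∈ Y₀, ∀ W ∈ 𝓝 (((0 : X), y) : X × X), {n | (S n y, (T ^ n) (S n y)) ∈ W} ∈ F)
    {W V : Set X} (hW : W ∈ 𝓝 0) (hV : IsOpen V) (hVne : V.Nonempty) :
    T.returnSet W V ∈ Ftilde F := by
  intro N
  obtain ⟨_, hyV, y, hy, rfl⟩ :=
    ((T.denseRange_pow hT N).dense_image (T ^ N).continuous hY₀).inter_open_nonempty V hV hVne
  refine ⟨_, hS y hy _ (prod_mem_nhds (T.setOf_forall_pow_apply_mem_mem_nhds_zero hW (2 * N))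
    ((hV.preimage (T ^ N).continuous).mem_nhds hyV)), ?_⟩
  rintro n ⟨hn₁, hn₂⟩ m h₁ h₂
  refine ⟨_, mem_image_of_mem _ (hn₁ (n + N - m) (by omega)), ?_⟩
  rwa [pow_apply_pow_apply, show m + (n + N - m) = N + n by omega, ← pow_apply_pow_apply]

end ContinuousLinearMap

theorem stmt15_general {X : Type*} [NormedAddCommGroup X] [NormedSpace ℝ X]
    (T : X →L[ℝ] X) (F : Set (Set ℕ))
    (hFinf : ∀ A ∈ F, A.Infinite)
    (htfilter : ∀ A ∈ Ftilde F, ∀ B ∈ Ftilde F, A ∩ B ∈ Ftilde F)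
    (X₀ Y₀ : Set X) (hX₀ : Dense X₀) (hY₀ : Dense Y₀)
    (I S : ℕ → X → X)
    (hI : ∀ x ∈ X₀, ∀ W ∈ nhds ((x, (0 : X)) : X × X),
      {n : ℕ | (I n x, (T ^ n) (I n x)) ∈ W} ∈ F)
    (hS : ∀ y ∈ Y₀, ∀ W ∈ nhds (((0 : X), y) : X × X),
      {n : ℕ | (S n y, (T ^ n) (S n y)) ∈ W} ∈ F) :
    ∀ U V : Set X, IsOpen U → U.Nonempty → IsOpen V → V.Nonempty →
      {n : ℕ | ((T ^ n) '' U ∩ V).Nonempty} ∈ Ftilde F := by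
  intro U V hU ⟨x, hx⟩ hV ⟨y, hy⟩
  have hT : DenseRange T := T.denseRange_of_pow_apply_mem hFinf hY₀ S
    fun y hy W hW => hS y hy _ (continuous_snd.continuousAt hW)
  obtain ⟨U₁, W₁, hU₁, hxU₁, hW₁, h0W₁, hUsplit⟩ :=
    exists_isOpen_add_subset (a := x) (b := 0) (by rw [add_zero]; exact hU.mem_nhds hx)
  obtain ⟨W₂, V₂, hW₂, h0W₂, hV₂, hyV₂, hVsplit⟩ :=
    exists_isOpen_add_subset (a := 0) (b := y) (by rw [zero_add]; exact hV.mem_nhds hy)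
  exact Ftilde_mono (htfilter _
    (T.returnSet_mem_Ftilde_of_nhds_zero_right hT hX₀ I hI hU₁ ⟨x, hxU₁⟩ (hW₂.mem_nhds h0W₂)) _
    (T.returnSet_mem_Ftilde_of_nhds_zero_left hT hY₀ S hS (hW₁.mem_nhds h0W₁) hV₂ ⟨y, hyV₂⟩))
    (T.returnSet_inter_subset hUsplit hVsplit)

/-- The `F`-Transitivity Criterion: if `F` is a Furstenberg family such that
`Ftilde F` is a filter, and there are dense sets `X₀, Y₀` and maps `I_n, S_n`
with `F-lim (I_n x, T^n I_n x) = (x, 0)` and `F-lim (S_n y, T^n S_n y) = (0, y)`,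
then `T` is `Ftilde F`-transitive. -/
theorem stmt15 {X : Type*} [NormedAddCommGroup X] [NormedSpace ℝ X] [CompleteSpace X]
    (hdim : ¬ FiniteDimensional ℝ X)
    (T : X →L[ℝ] X) (F : Set (Set ℕ))
    (hFne : F.Nonempty) (hFinf : ∀ A ∈ F, A.Infinite)
    (hFup : ∀ A ∈ F, ∀ B : Set ℕ, A ⊆ B → B ∈ F)
    (htne : (Ftilde F).Nonempty) (htinf : ∀ A ∈ Ftilde F, A.Infinite)
    (htup : ∀ A ∈ Ftilde F, ∀ B : Set ℕ, A ⊆ B → B ∈ Ftilde F)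
    (htfilter : ∀ A ∈ Ftilde F, ∀ B ∈ Ftilde F, A ∩ B ∈ Ftilde F)
    (X₀ Y₀ : Set X) (hX₀ : Dense X₀) (hY₀ : Dense Y₀)
    (I S : ℕ → X → X)
    (hI : ∀ x ∈ X₀, ∀ W ∈ nhds ((x, (0 : X)) : X × X),
      {n : ℕ | (I n x, (T ^ n) (I n x)) ∈ W} ∈ F)
    (hS : ∀ y ∈ Y₀, ∀ W ∈ nhds (((0 : X), y) : X × X),
      {n : ℕ | (S n y, (T ^ n) (S n y)) ∈ W} ∈ F) :
    ∀ U V : Set X, IsOpen U → U.Nonempty → IsOpen V → V.Nonempty →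
      {n : ℕ | ((T ^ n) '' U ∩ V).Nonempty} ∈ Ftilde F :=
  stmt15_general T F hFinf htfilter X₀ Y₀ hX₀ hY₀ I S hI hS
end

section
/- Consider the rooted directed tree with root $\mathrm{o}$ having two children $u_1$ and $v_1$, each vertex $u_k$ having one child $u_{k+1}$ and each $v_k$ one child $v_{k+1}$. Define a weight $\mu$ with $\mu_{\mathrm{o}}=1$, $\mu_{u_k}=1/\mu_{v_k}$, and $(\mu_{v_k})_{k\geq1}$ given in consecutive blocks of lengths $2m_1,2m_2,\dots$ by $(1/2,\dots,1/2^{m_1},2/2^{m_1},\dots,1/2,1,\;2,\dots,2^{m_2},2^{m_2}/2,\dots,2,1,\dots)$ for a strictly increasing sequence $(m_k)$ of positive integers. Then for $1<p<\infty$ the backward shift $B$ is bounded on $\ell^p(V,\mu)$ with $\|B\|=(2^{p^*}+2^{-p^*})^{1/p^*}$, and for every $k\geq1$ and $N\in\mathbb{N}$ the sets $\{n: 1/|\mu_{v_{k+n}}|>N\}$ and $\{n: 1/|\mu_{u_{k+n}}|>N\}$ are disjoint; in particular $B$ is not hypercyclic. -/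
open scoped ENNReal NNReal

/-- Vertices of the rooted tree: a root with two infinite branches.
`u k` denotes `u_{k+1}` and `v k` denotes `v_{k+1}`. -/
inductive V16 where
  | root : V16
  | u : ℕ → V16
  | v : ℕ → V16

/-- Edges of the rooted tree: `root → u₁`, `root → v₁`, `u_k → u_{k+1}`,
`v_k → v_{k+1}`. -/
inductive E16 : V16 → V16 → Prop where
  | ru : E16 .root (.u 0)
  | rv : E16 .root (.v 0)
  | uu (k : ℕ) : E16 (.u k) (.u (k + 1))
  | vv (k : ℕ) : E16 (.v k) (.v (k + 1))

/-- The weight determined by a sequence of exponents `e`: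
`μ_root = 1`, `μ_{v_k} = 2^{e k}` and `μ_{u_k} = 1/μ_{v_k} = 2^{-e k}`. -/
noncomputable def mu16 (e : ℕ → ℤ) : V16 → ℝ
  | .root => 1
  | .v k => 2 ^ e (k + 1)
  | .u k => 2 ^ (-e (k + 1))

/-!
The exponents `e` start with `e 1 = -1` and change by at most one from each index to the next,
so along each branch consecutive weights differ by a factor at most `2`, while at the root `B`
adds the values at `u₁` and `v₁`, whose weights are `2` and `1/2`. With `q = p*` and
`K = 2^q + 2^(-q)`, Hölder's inequality for the pair `(2, 1/2)` bounds the root coordinate of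
`Bf` by `K^(1/q) ‖f‖`, and `2 ≤ K^(1/q)` handles the branches; the vector supported on `u₁, v₁`
that is extremal for this Hölder inequality shows that the bound is attained.

Since `μ_{u_k} μ_{v_k} = 1`, at every depth one of the two weights is at least `1`, so a vector of
norm `P` is at most `P` at `u_n` or at `v_n`. Hence no iterate `Bⁿ f` comes close to the vector
equal to `P + 1` at both `u₁` and `v₁`.
-/

namespace V16

def equivUnitSum : V16 ≃ Unit ⊕ (ℕ ⊕ ℕ) where
  toFun
    | .root => .inl ()
    | .u k => .inr (.inl k)
    | .v k => .inr (.inr k)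
  invFun
    | .inl () => .root
    | .inr (.inl k) => .u k
    | .inr (.inr k) => .v k
  left_inv w := by cases w <;> rfl
  right_inv x := by rcases x with _ | _ | _ <;> rfl

theorem tsum_eq (h : V16 → ℝ≥0∞) :
    ∑' w, h w = h .root + ((∑' k, h (.u k)) + ∑' k, h (.v k)) := by
  rw [← equivUnitSum.symm.tsum_eq, ENNReal.summable.tsum_sum ENNReal.summable,
    ENNReal.summable.tsum_sum ENNReal.summable, (hasSum_unique _).tsum_eq]
  rfl

end V16

theorem Bop_E16_u (f : V16 → ℝ) (k : ℕ) : Bop E16 f (.u k) = f (.u (k + 1)) := by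
  rw [Bop]
  exact tsum_eq_single (⟨_, .uu k⟩ : {w // E16 (.u k) w}) fun ⟨_, h⟩ hne =>
    absurd (by cases h; rfl) hne

theorem Bop_E16_v (f : V16 → ℝ) (k : ℕ) : Bop E16 f (.v k) = f (.v (k + 1)) := by
  rw [Bop]
  exact tsum_eq_single (⟨_, .vv k⟩ : {w // E16 (.v k) w}) fun ⟨_, h⟩ hne =>
    absurd (by cases h; rfl) hne

theorem Bop_E16_root (f : V16 → ℝ) : Bop E16 f .root = f (.u 0) + f (.v 0) := by
  let e : Bool ≃ {w // E16 .root w} :=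
    { toFun := fun b => if b then ⟨_, .rv⟩ else ⟨_, .ru⟩
      invFun := fun w => w.1 matches .v _
      left_inv := by rintro (_ | _) <;> rfl
      right_inv := by rintro ⟨_, h⟩; cases h <;> rfl }
  rw [Bop, ← e.tsum_eq, tsum_bool]
  rfl

theorem iterate_Bop_E16_u (n : ℕ) (f : V16 → ℝ) (k : ℕ) :
    (Bop E16)^[n] f (.u k) = f (.u (k + n)) := by
  induction n generalizing f with
  | zero => rfl
  | succ n ih => rw [Function.iterate_succ_apply, ih, Bop_E16_u]; rfl

theorem iterate_Bop_E16_v (n : ℕ) (f : V16 → ℝ) (k : ℕ) :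
    (Bop E16)^[n] f (.v k) = f (.v (k + n)) := by
  induction n generalizing f with
  | zero => rfl
  | succ n ih => rw [Function.iterate_succ_apply, ih, Bop_E16_v]; rfl

section BlockExponent

variable {m b : ℕ → ℕ} {e : ℕ → ℤ}

def IsBlockExponent (m b : ℕ → ℕ) (e : ℕ → ℤ) : Prop :=
  ∀ j i : ℕ, 1 ≤ i → i ≤ m (j + 1) →
    e (b j + i) = (if Even j then (-1 : ℤ) else 1) * (i : ℤ) ∧
    e (b j + m (j + 1) + i) = (if Even j then (-1 : ℤ) else 1) * ((m (j + 1) : ℤ) - (i : ℤ))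

theorem exists_eq_block_add (hmpos : ∀ k, 1 ≤ k → 0 < m k) (hb0 : b 0 = 0)
    (hb : ∀ j, b (j + 1) = b j + 2 * m (j + 1)) {n : ℕ} (hn : 1 ≤ n) :
    ∃ j i, 1 ≤ i ∧ i ≤ 2 * m (j + 1) ∧ n = b j + i := by
  induction n, hn using Nat.le_induction with
  | base => exact ⟨0, 1, le_rfl, by have := hmpos (0 + 1) le_rfl; omega, by rw [hb0]⟩
  | succ n _ ih =>
    obtain ⟨j, i, hi1, hi2, rfl⟩ := ih
    rcases hi2.lt_or_eq with hlt | heq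
    · exact ⟨j, i + 1, by omega, hlt, by omega⟩
    · exact ⟨j + 1, 1, le_rfl, by have := hmpos (j + 1 + 1) (by omega); omega, by rw [hb]; omega⟩

namespace IsBlockExponent

theorem eq_sign_mul_min (he : IsBlockExponent m b e) {j i : ℕ} (hi1 : 1 ≤ i)
    (hi2 : i ≤ 2 * m (j + 1)) :
    e (b j + i) = (if Even j then (-1 : ℤ) else 1) * min (i : ℤ) (2 * m (j + 1) - i) := by
  rcases le_or_gt i (m (j + 1)) with hle | hgt
  · rw [(he j i hi1 hle).1, min_eq_left (by omega)]
  · have h := (he j (i - m (j + 1)) (by omega) (by omega)).2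
    rw [show b j + m (j + 1) + (i - m (j + 1)) = b j + i by omega] at h
    rw [h, min_eq_right (by omega)]
    push_cast [hgt.le]
    ring

theorem abs_succ_sub_le (he : IsBlockExponent m b e) (hmpos : ∀ k, 1 ≤ k → 0 < m k)
    (hb0 : b 0 = 0) (hb : ∀ j, b (j + 1) = b j + 2 * m (j + 1)) {n : ℕ} (hn : 1 ≤ n) :
    |e (n + 1) - e n| ≤ 1 := by
  obtain ⟨j, i, hi1, hi2, rfl⟩ := exists_eq_block_add hmpos hb0 hb hn
  rw [he.eq_sign_mul_min hi1 hi2]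
  rcases hi2.lt_or_eq with hlt | heq
  · rw [add_assoc, he.eq_sign_mul_min (by omega) hlt]
    split_ifs <;> rw [abs_le] <;> constructor <;> omega
  · have hm := hmpos (j + 1 + 1) (by omega)
    have hparity : Even (j + 1) ↔ ¬Even j := Nat.even_add_one
    rw [show b j + i + 1 = b (j + 1) + 1 by rw [hb]; omega, he.eq_sign_mul_min le_rfl (by omega)]
    split_ifs <;> first | (exfalso; tauto) | (rw [abs_le]; constructor <;> omega)

theorem apply_one (he : IsBlockExponent m b e) (hmpos : ∀ k, 1 ≤ k → 0 < m k) (hb0 : b 0 = 0) :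
    e 1 = -1 := by
  simpa [hb0] using (he 0 1 le_rfl (hmpos (0 + 1) le_rfl)).1

end IsBlockExponent

end BlockExponent

section Weight

variable {e : ℕ → ℤ}

theorem mu16_pos (e : ℕ → ℤ) (w : V16) : 0 < mu16 e w := by
  cases w <;> simp only [mu16] <;> positivity

theorem mu16_v_mul_mu16_u (e : ℕ → ℤ) (k : ℕ) : mu16 e (.v k) * mu16 e (.u k) = 1 := by
  rw [mu16, mu16, zpow_neg, mul_inv_cancel₀ (zpow_ne_zero _ two_ne_zero)]

theorem mu16_u_zero (he1 : e 1 = -1) : mu16 e (.u 0) = 2 := by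
  simp [mu16, he1]

theorem mu16_v_zero (he1 : e 1 = -1) : mu16 e (.v 0) = 2⁻¹ := by
  simp [mu16, he1]

theorem nnnorm_mu16_u_le {k : ℕ} (hstep : |e (k + 1 + 1) - e (k + 1)| ≤ 1) :
    ‖mu16 e (.u k)‖₊ ≤ 2 * ‖mu16 e (.u (k + 1))‖₊ := by
  rw [mu16, mu16, nnnorm_zpow, nnnorm_zpow, Real.nnnorm_two, ← zpow_one_add₀ two_ne_zero]
  exact zpow_le_zpow_right₀ one_le_two (by rw [abs_le] at hstep; omega)

theorem nnnorm_mu16_v_le {k : ℕ} (hstep : |e (k + 1 + 1) - e (k + 1)| ≤ 1) :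
    ‖mu16 e (.v k)‖₊ ≤ 2 * ‖mu16 e (.v (k + 1))‖₊ := by
  rw [mu16, mu16, nnnorm_zpow, nnnorm_zpow, Real.nnnorm_two, ← zpow_one_add₀ two_ne_zero]
  exact zpow_le_zpow_right₀ one_le_two (by rw [abs_le] at hstep; omega)

theorem one_le_mu16_u_or_one_le_mu16_v (e : ℕ → ℤ) (k : ℕ) :
    1 ≤ mu16 e (.u k) ∨ 1 ≤ mu16 e (.v k) := by
  by_contra! h
  have := mu16_v_mul_mu16_u e k
  nlinarith [mu16_pos e (.u k), mu16_pos e (.v k)]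

end Weight

section WeightedNorm

variable {V 𝕜 : Type*} [RCLike 𝕜] {p : ℝ}

theorem coe_nnnorm_mul_le_pnorm (hp : 0 < p) (μ f : V → 𝕜) (w : V) :
    (‖f w * μ w‖₊ : ℝ≥0∞) ≤ pnorm μ p f :=
  calc (‖f w * μ w‖₊ : ℝ≥0∞) = ((‖f w * μ w‖₊ : ℝ≥0∞) ^ p) ^ (1 / p) := by
        rw [one_div, ENNReal.rpow_rpow_inv hp.ne']
    _ ≤ pnorm μ p f := ENNReal.rpow_le_rpow (ENNReal.le_tsum w) (by positivity)

theorem pnorm_le_of_tsum_le (hp : 0 < p) {μ f g : V → 𝕜} {c : ℝ≥0∞}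
    (h : ∑' w, (‖g w * μ w‖₊ : ℝ≥0∞) ^ p ≤ c * ∑' w, (‖f w * μ w‖₊ : ℝ≥0∞) ^ p) :
    pnorm μ p g ≤ c ^ (1 / p) * pnorm μ p f := by
  rw [pnorm, pnorm, ← ENNReal.mul_rpow_of_nonneg _ _ (by positivity)]
  exact ENNReal.rpow_le_rpow h (by positivity)

theorem abs_mul_le_toReal_pnorm (hp : 0 < p) {μ f : V → ℝ} (hf : pnorm μ p f ≠ ⊤) (w : V) :
    |f w * μ w| ≤ (pnorm μ p f).toReal :=
  ENNReal.toReal_mono hf (coe_nnnorm_mul_le_pnorm hp μ f w)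

end WeightedNorm

theorem ENNReal.add_mul_rpow_le {p q : ℝ} (hpq : p.HolderConjugate q) (a b x y : ℝ≥0∞) :
    (a * x + b * y) ^ p ≤ (a ^ q + b ^ q) ^ (p - 1) * (x ^ p + y ^ p) := by
  have h := ENNReal.inner_le_Lp_mul_Lq Finset.univ (fun i : Bool => if i then x else y)
    (fun i => if i then a else b) hpq
  simp only [Fintype.sum_bool, if_true, Bool.false_eq_true, if_false] at h
  calc (a * x + b * y) ^ p = (x * a + y * b) ^ p := by rw [mul_comm a, mul_comm b]
    _ ≤ ((x ^ p + y ^ p) ^ (1 / p) * (a ^ q + b ^ q) ^ (1 / q)) ^ p :=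
      ENNReal.rpow_le_rpow h hpq.nonneg
    _ = (a ^ q + b ^ q) ^ (p - 1) * (x ^ p + y ^ p) := by
      rw [ENNReal.mul_rpow_of_nonneg _ _ hpq.nonneg, ← ENNReal.rpow_mul, ← ENNReal.rpow_mul,
        one_div_mul_cancel hpq.ne_zero, ENNReal.rpow_one, one_div_mul_eq_div,
        hpq.div_conj_eq_sub_one, mul_comm]

section Bounded

variable {p q : ℝ} {e : ℕ → ℤ}

theorem two_rpow_le_rpow_sub_one (hpq : p.HolderConjugate q) :
    (2 : ℝ≥0∞) ^ p ≤ (2 ^ q + 2 ^ (-q)) ^ (p - 1) :=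
  calc (2 : ℝ≥0∞) ^ p = (2 ^ q) ^ (p - 1) := by
        rw [← ENNReal.rpow_mul, mul_comm, hpq.sub_one_mul_conj]
    _ ≤ (2 ^ q + 2 ^ (-q)) ^ (p - 1) := ENNReal.rpow_le_rpow le_self_add hpq.sub_one_pos.le

theorem rpow_nnnorm_mul_le_of_nnnorm_le (hpq : p.HolderConjugate q) (c : ℝ) {a b : ℝ}
    (hab : ‖a‖₊ ≤ 2 * ‖b‖₊) :
    (‖c * a‖₊ : ℝ≥0∞) ^ p ≤ (2 ^ q + 2 ^ (-q)) ^ (p - 1) * (‖c * b‖₊ : ℝ≥0∞) ^ p := by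
  have h : (‖c * a‖₊ : ℝ≥0∞) ≤ 2 * ‖c * b‖₊ := by
    rw [nnnorm_mul, nnnorm_mul]
    exact_mod_cast (mul_le_mul_right hab _).trans_eq (mul_left_comm _ _ _)
  calc (‖c * a‖₊ : ℝ≥0∞) ^ p ≤ (2 * ‖c * b‖₊) ^ p := ENNReal.rpow_le_rpow h hpq.nonneg
    _ = 2 ^ p * (‖c * b‖₊ : ℝ≥0∞) ^ p := ENNReal.mul_rpow_of_nonneg _ _ hpq.nonneg
    _ ≤ _ := by gcongr; exact two_rpow_le_rpow_sub_one hpq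

theorem rpow_nnnorm_Bop_E16_root_le (hpq : p.HolderConjugate q) (he1 : e 1 = -1)
    (f : V16 → ℝ) :
    (‖Bop E16 f .root * mu16 e .root‖₊ : ℝ≥0∞) ^ p ≤ (2 ^ q + 2 ^ (-q)) ^ (p - 1) *
      ((‖f (.u 0) * mu16 e (.u 0)‖₊ : ℝ≥0∞) ^ p + (‖f (.v 0) * mu16 e (.v 0)‖₊ : ℝ≥0∞) ^ p) := by
  have h : ‖Bop E16 f .root * mu16 e .root‖₊ ≤
      2 * ‖f (.v 0) * mu16 e (.v 0)‖₊ + 2⁻¹ * ‖f (.u 0) * mu16 e (.u 0)‖₊ := by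
    rw [Bop_E16_root, show mu16 e .root = 1 from rfl, mul_one, mu16_u_zero he1,
      mu16_v_zero he1, nnnorm_mul, nnnorm_mul, nnnorm_inv, Real.nnnorm_two, add_comm (f _)]
    convert nnnorm_add_le (f (.v 0)) (f (.u 0)) using 2 <;> field_simp
  calc (‖Bop E16 f .root * mu16 e .root‖₊ : ℝ≥0∞) ^ p
      ≤ (2 * ‖f (.v 0) * mu16 e (.v 0)‖₊ + 2⁻¹ * ‖f (.u 0) * mu16 e (.u 0)‖₊) ^ p :=
        ENNReal.rpow_le_rpow (by simpa [ENNReal.coe_inv_two] using ENNReal.coe_le_coe.2 h)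
          hpq.nonneg
    _ ≤ (2 ^ q + 2⁻¹ ^ q) ^ (p - 1) *
        ((‖f (.v 0) * mu16 e (.v 0)‖₊ : ℝ≥0∞) ^ p + (‖f (.u 0) * mu16 e (.u 0)‖₊ : ℝ≥0∞) ^ p) :=
        ENNReal.add_mul_rpow_le hpq _ _ _ _
    _ = _ := by rw [ENNReal.inv_rpow, ← ENNReal.rpow_neg, add_comm (_ ^ p)]

theorem tsum_Bop_E16_le (hpq : p.HolderConjugate q) (he1 : e 1 = -1)
    (hstep : ∀ n, 1 ≤ n → |e (n + 1) - e n| ≤ 1) (f : V16 → ℝ) :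
    ∑' w, (‖Bop E16 f w * mu16 e w‖₊ : ℝ≥0∞) ^ p ≤
      (2 ^ q + 2 ^ (-q)) ^ (p - 1) * ∑' w, (‖f w * mu16 e w‖₊ : ℝ≥0∞) ^ p := by
  set K := ((2 : ℝ≥0∞) ^ q + 2 ^ (-q)) ^ (p - 1)
  set F := fun w => (‖f w * mu16 e w‖₊ : ℝ≥0∞) ^ p
  have hu k : (‖Bop E16 f (.u k) * mu16 e (.u k)‖₊ : ℝ≥0∞) ^ p ≤ K * F (.u (k + 1)) := by
    rw [Bop_E16_u]
    exact rpow_nnnorm_mul_le_of_nnnorm_le hpq _ (nnnorm_mu16_u_le (hstep (k + 1) le_add_self))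
  have hv k : (‖Bop E16 f (.v k) * mu16 e (.v k)‖₊ : ℝ≥0∞) ^ p ≤ K * F (.v (k + 1)) := by
    rw [Bop_E16_v]
    exact rpow_nnnorm_mul_le_of_nnnorm_le hpq _ (nnnorm_mu16_v_le (hstep (k + 1) le_add_self))
  calc ∑' w, (‖Bop E16 f w * mu16 e w‖₊ : ℝ≥0∞) ^ p
      ≤ K * (F (.u 0) + F (.v 0)) + ((∑' k, K * F (.u (k + 1))) + ∑' k, K * F (.v (k + 1))) := by
        rw [V16.tsum_eq]
        exact add_le_add (rpow_nnnorm_Bop_E16_root_le hpq he1 f)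
          (add_le_add (ENNReal.tsum_le_tsum hu) (ENNReal.tsum_le_tsum hv))
    _ = K * ((F (.u 0) + ∑' k, F (.u (k + 1))) + (F (.v 0) + ∑' k, F (.v (k + 1)))) := by
        rw [ENNReal.tsum_mul_left, ENNReal.tsum_mul_left]
        ring
    _ ≤ K * ∑' w, F w := by
        rw [← tsum_eq_zero_add' (f := fun k => F (.u k)) ENNReal.summable,
          ← tsum_eq_zero_add' (f := fun k => F (.v k)) ENNReal.summable, V16.tsum_eq F]
        exact mul_le_mul_right le_add_self K

theorem pnorm_Bop_E16_le (hpq : p.HolderConjugate q) (he1 : e 1 = -1)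
    (hstep : ∀ n, 1 ≤ n → |e (n + 1) - e n| ≤ 1) (f : V16 → ℝ) :
    pnorm (mu16 e) p (Bop E16 f) ≤ ((2 : ℝ≥0∞) ^ q + 2 ^ (-q)) ^ (1 / q) * pnorm (mu16 e) p f := by
  have h := pnorm_le_of_tsum_le hpq.pos (tsum_Bop_E16_le hpq he1 hstep f)
  have hexp : (p - 1) * (1 / p) = 1 / q := by
    field_simp [hpq.ne_zero, hpq.symm.ne_zero]
    linarith [hpq.mul_eq_add]
  rwa [← ENNReal.rpow_mul, hexp] at h

end Bounded

namespace V16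

def ofFirst (a c : ℝ) : V16 → ℝ
  | .u 0 => a
  | .v 0 => c
  | _ => 0

theorem tsum_ofFirst {p : ℝ} (hp : 0 < p) (μ : V16 → ℝ) (a c : ℝ) :
    ∑' w, (‖ofFirst a c w * μ w‖₊ : ℝ≥0∞) ^ p =
      (‖a * μ (.u 0)‖₊ : ℝ≥0∞) ^ p + (‖c * μ (.v 0)‖₊ : ℝ≥0∞) ^ p := by
  have hzero (x : ℝ) : (‖0 * x‖₊ : ℝ≥0∞) ^ p = 0 := by simp [hp]
  rw [tsum_eq, tsum_eq_single 0, tsum_eq_single 0]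
  · exact (congrArg (· + _) (hzero _)).trans (zero_add _)
  all_goals rintro (_ | k) hk
  all_goals first | exact absurd rfl hk | exact hzero _

theorem pnorm_ofFirst_ne_top {p : ℝ} (hp : 0 < p) (μ : V16 → ℝ) (a c : ℝ) :
    pnorm μ p (ofFirst a c) ≠ ⊤ := by
  rw [pnorm, tsum_ofFirst hp]
  finiteness

end V16

theorem coe_nnnorm_two_rpow (x : ℝ) : (‖(2 : ℝ) ^ x‖₊ : ℝ≥0∞) = 2 ^ x := by
  rw [Real.nnnorm_rpow_of_nonneg zero_le_two, Real.nnnorm_two,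
    ENNReal.coe_rpow_of_ne_zero two_ne_zero]
  rfl

theorem rpow_le_of_pnorm_Bop_E16_le {p q : ℝ} {e : ℕ → ℤ} (hpq : p.HolderConjugate q)
    (he1 : e 1 = -1) {C : ℝ≥0∞}
    (hC : ∀ f, pnorm (mu16 e) p (Bop E16 f) ≤ C * pnorm (mu16 e) p f) :
    ((2 : ℝ≥0∞) ^ q + 2 ^ (-q)) ^ (1 / q) ≤ C := by
  set K := (2 : ℝ≥0∞) ^ q + 2 ^ (-q)
  -- the equality case of the Hölder inequality in `rpow_nnnorm_Bop_E16_root_le`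
  set f := V16.ofFirst (2 ^ (-q)) (2 ^ q)
  have hK0 : K ≠ 0 := by positivity
  have hKtop : K ≠ ⊤ := by finiteness
  have hf : pnorm (mu16 e) p f = K ^ (1 / p) := by
    rw [pnorm, V16.tsum_ofFirst hpq.pos, mu16_u_zero he1, mu16_v_zero he1,
      ← Real.rpow_add_one two_ne_zero, ← div_eq_mul_inv, ← Real.rpow_sub_one two_ne_zero,
      coe_nnnorm_two_rpow, coe_nnnorm_two_rpow, ← ENNReal.rpow_mul, ← ENNReal.rpow_mul, add_comm]
    congr 3 <;> linarith [hpq.mul_eq_add]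
  have hBf : K ≤ pnorm (mu16 e) p (Bop E16 f) := by
    refine le_of_eq_of_le ?_ (coe_nnnorm_mul_le_pnorm hpq.pos _ _ .root)
    rw [Bop_E16_root, show mu16 e .root = 1 from rfl, mul_one]
    change K = ‖(2 : ℝ) ^ (-q) + 2 ^ q‖₊
    rw [← enorm_eq_nnnorm,
      Real.enorm_of_nonneg (by positivity), ENNReal.ofReal_add (by positivity) (by positivity),
      ← ENNReal.ofReal_rpow_of_pos two_pos, ← ENNReal.ofReal_rpow_of_pos two_pos,
      ENNReal.ofReal_ofNat, add_comm]
  have h : K ^ (1 / q) * K ^ (1 / p) ≤ C * K ^ (1 / p) :=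
    calc K ^ (1 / q) * K ^ (1 / p) = K := by
          rw [← ENNReal.rpow_add _ _ hK0 hKtop, one_div, one_div, add_comm,
            hpq.inv_add_inv_eq_one, ENNReal.rpow_one]
      _ ≤ pnorm (mu16 e) p (Bop E16 f) := hBf
      _ ≤ C * K ^ (1 / p) := hf ▸ hC f
  exact (ENNReal.mul_le_mul_iff_left (by positivity) (by finiteness)).1 h

def IsHypercyclicVector {V : Type*} (μ : V → ℝ) (p : ℝ) (T : (V → ℝ) → V → ℝ) (f : V → ℝ) :
    Prop :=
  pnorm μ p f ≠ ⊤ ∧ ∀ g : V → ℝ, pnorm μ p g ≠ ⊤ → ∀ ε : ℝ≥0∞, 0 < ε →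
    ∃ n : ℕ, pnorm μ p (fun w => T^[n] f w - g w) < ε

theorem not_isHypercyclicVector_Bop_E16 {p : ℝ} (hp : 0 < p) (e : ℕ → ℤ) (f : V16 → ℝ) :
    ¬IsHypercyclicVector (mu16 e) p (Bop E16) f := by
  rintro ⟨hf, hdense⟩
  set P := (pnorm (mu16 e) p f).toReal
  set c := min (mu16 e (.u 0)) (mu16 e (.v 0))
  have hc : 0 < c := lt_min (mu16_pos e _) (mu16_pos e _)
  obtain ⟨n, hn⟩ := hdense (V16.ofFirst (P + 1) (P + 1)) (V16.pnorm_ofFirst_ne_top hp _ _ _)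
    (ENNReal.ofReal c) (ENNReal.ofReal_pos.2 hc)
  have hexceeds (w : V16) (hw : c ≤ mu16 e w) (hg : V16.ofFirst (P + 1) (P + 1) w = P + 1) :
      P < (Bop E16)^[n] f w := by
    have h := (abs_mul_le_toReal_pnorm hp hn.ne_top w).trans_lt (ENNReal.toReal_lt_of_lt_ofReal hn)
    rw [abs_mul, abs_of_pos (mu16_pos e w), hg] at h
    nlinarith [neg_abs_le ((Bop E16)^[n] f w - (P + 1))]
  have hbounded (w : V16) (hw : 1 ≤ mu16 e w) : f w ≤ P := by
    have h : |f w * mu16 e w| ≤ P := abs_mul_le_toReal_pnorm hp hf w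
    rw [abs_mul, abs_of_pos (mu16_pos e w)] at h
    linarith [le_abs_self (f w), mul_le_mul_of_nonneg_left hw (abs_nonneg (f w))]
  have hu := hexceeds (.u 0) (min_le_left _ _) rfl
  have hv := hexceeds (.v 0) (min_le_right _ _) rfl
  rw [iterate_Bop_E16_u, zero_add] at hu
  rw [iterate_Bop_E16_v, zero_add] at hv
  rcases one_le_mu16_u_or_one_le_mu16_v e n with h | h
  · exact (hu.trans_le (hbounded _ h)).false
  · exact (hv.trans_le (hbounded _ h)).false

theorem not_lt_one_div_abs_mu16_v_and_u (e : ℕ → ℤ) (k : ℕ) {N : ℝ} (hN : 1 ≤ N) :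
    ¬(N < 1 / |mu16 e (.v k)| ∧ N < 1 / |mu16 e (.u k)|) := by
  have h (w : V16) (hw : 1 ≤ mu16 e w) : 1 / |mu16 e w| ≤ N := by
    rw [abs_of_pos (mu16_pos e w), one_div]
    exact (inv_le_one_of_one_le₀ hw).trans hN
  rcases one_le_mu16_u_or_one_le_mu16_v e k with hu | hv
  · exact fun hlt => (h _ hu).not_gt hlt.2
  · exact fun hlt => (h _ hv).not_gt hlt.1

theorem stmt16_general (p : ℝ) (hp : 1 < p)
    (m : ℕ → ℕ) (hmpos : ∀ k, 1 ≤ k → 0 < m k)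
    (b : ℕ → ℕ) (hb0 : b 0 = 0) (hb : ∀ j, b (j + 1) = b j + 2 * m (j + 1))
    (e : ℕ → ℤ)
    (he : ∀ j i : ℕ, 1 ≤ i → i ≤ m (j + 1) →
      e (b j + i) = (if Even j then (-1 : ℤ) else 1) * (i : ℤ) ∧
      e (b j + m (j + 1) + i) = (if Even j then (-1 : ℤ) else 1) * ((m (j + 1) : ℤ) - (i : ℤ))) :
    ((∃ C : ℝ≥0∞, C ≠ ⊤ ∧
        ∀ f : V16 → ℝ, pnorm (mu16 e) p (Bop E16 f) ≤ C * pnorm (mu16 e) p f) ∧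
      sInf {C : ℝ≥0∞ |
          ∀ f : V16 → ℝ, pnorm (mu16 e) p (Bop E16 f) ≤ C * pnorm (mu16 e) p f}
        = ((2 : ℝ≥0∞) ^ (p / (p - 1)) + (2 : ℝ≥0∞) ^ (-(p / (p - 1)))) ^ (1 / (p / (p - 1)))) ∧
    (∀ k N : ℕ, 1 ≤ k → 1 ≤ N →
      {n : ℕ | (N : ℝ) < 1 / |mu16 e (V16.v (k + n - 1))|} ∩
        {n : ℕ | (N : ℝ) < 1 / |mu16 e (V16.u (k + n - 1))|} = ∅) ∧
    ¬ ∃ f : V16 → ℝ, pnorm (mu16 e) p f ≠ ⊤ ∧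
        ∀ g : V16 → ℝ, pnorm (mu16 e) p g ≠ ⊤ → ∀ ε : ℝ≥0∞, 0 < ε →
          ∃ n : ℕ, pnorm (mu16 e) p (fun w => (Bop E16)^[n] f w - g w) < ε := by
  have hpq : p.HolderConjugate (p / (p - 1)) := .conjExponent hp
  have he : IsBlockExponent m b e := he
  have he1 : e 1 = -1 := he.apply_one hmpos hb0
  have hstep (n : ℕ) (hn : 1 ≤ n) : |e (n + 1) - e n| ≤ 1 := he.abs_succ_sub_le hmpos hb0 hb hn
  have hleast : IsLeast
      {C : ℝ≥0∞ | ∀ f : V16 → ℝ, pnorm (mu16 e) p (Bop E16 f) ≤ C * pnorm (mu16 e) p f}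
      (((2 : ℝ≥0∞) ^ (p / (p - 1)) + 2 ^ (-(p / (p - 1)))) ^ (1 / (p / (p - 1)))) :=
    ⟨pnorm_Bop_E16_le hpq he1 hstep, fun _ hC => rpow_le_of_pnorm_Bop_E16_le hpq he1 hC⟩
  refine ⟨⟨⟨_, by finiteness, hleast.1⟩, hleast.isGLB.sInf_eq⟩, ?_,
    fun ⟨f, hf⟩ => not_isHypercyclicVector_Bop_E16 (by linarith) e f hf⟩
  intro k N _ hN
  exact Set.eq_empty_of_forall_notMem fun n hn =>
    not_lt_one_div_abs_mu16_v_and_u e _ (by exact_mod_cast hN) hn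

/-- Example: on the rooted tree with two branches and the block-defined weight
`(μ_{v_k})` (with `μ_{u_k} = 1/μ_{v_k}`), the backward shift `B` is bounded on
`ℓ^p(V,μ)` with `‖B‖ = (2^{p*} + 2^{-p*})^{1/p*}`, the return-time sets
`{n : 1/|μ_{v_{k+n}}| > N}` and `{n : 1/|μ_{u_{k+n}}| > N}` are disjoint, and
`B` is not hypercyclic. -/
theorem stmt16 (p : ℝ) (hp : 1 < p)
    (m : ℕ → ℕ) (hmpos : ∀ k, 1 ≤ k → 0 < m k) (hmmono : ∀ k, 1 ≤ k → m k < m (k + 1))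
    (b : ℕ → ℕ) (hb0 : b 0 = 0) (hb : ∀ j, b (j + 1) = b j + 2 * m (j + 1))
    (e : ℕ → ℤ)
    (he : ∀ j i : ℕ, 1 ≤ i → i ≤ m (j + 1) →
      e (b j + i) = (if Even j then (-1 : ℤ) else 1) * (i : ℤ) ∧
      e (b j + m (j + 1) + i) = (if Even j then (-1 : ℤ) else 1) * ((m (j + 1) : ℤ) - (i : ℤ))) :
    ((∃ C : ℝ≥0∞, C ≠ ⊤ ∧
        ∀ f : V16 → ℝ, pnorm (mu16 e) p (Bop E16 f) ≤ C * pnorm (mu16 e) p f) ∧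
      sInf {C : ℝ≥0∞ |
          ∀ f : V16 → ℝ, pnorm (mu16 e) p (Bop E16 f) ≤ C * pnorm (mu16 e) p f}
        = ((2 : ℝ≥0∞) ^ (p / (p - 1)) + (2 : ℝ≥0∞) ^ (-(p / (p - 1)))) ^ (1 / (p / (p - 1)))) ∧
    (∀ k N : ℕ, 1 ≤ k → 1 ≤ N →
      {n : ℕ | (N : ℝ) < 1 / |mu16 e (V16.v (k + n - 1))|} ∩
        {n : ℕ | (N : ℝ) < 1 / |mu16 e (V16.u (k + n - 1))|} = ∅) ∧
    ¬ ∃ f : V16 → ℝ, pnorm (mu16 e) p f ≠ ⊤ ∧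
        ∀ g : V16 → ℝ, pnorm (mu16 e) p g ≠ ⊤ → ∀ ε : ℝ≥0∞, 0 < ε →
          ∃ n : ℕ, pnorm (mu16 e) p (fun w => (Bop E16)^[n] f w - g w) < ε :=
  stmt16_general p hp m hmpos b hb0 hb e he
end

section
/- Let $X$ be an infinite-dimensional Banach space, $T$ a bounded linear operator on $X$, and $\Gamma\subset\mathbb{C}$ with $\Gamma\setminus\{0\}\neq\emptyset$. Suppose there exist an increasing sequence $(n_k)$ of positive integers, a sequence $(\lambda_k)$ in $\Gamma\setminus\{0\}$, dense subsets $X_0,Y_0\subset X$, and maps $I_{n_k}:X_0\to X$, $S_{n_k}:Y_0\to X$ such that for all $x\in X_0$, $y\in Y_0$: $I_{n_k}x\to x$, $\lambda_k T^{n_k}I_{n_k}x\to 0$, $\lambda_k^{-1}S_{n_k}y\to 0$, and $T^{n_k}S_{n_k}y\to y$. Then for all nonempty open $U_1,U_2,V_1,V_2\subset X$ there exist $k$, $z_1\in U_1$, $z_2\in U_2$ with $(\lambda_k T^{n_k}z_1,\lambda_k T^{n_k}z_2)\in V_1\times V_2$. -/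
open Filter Topology

/- For `x ∈ X₀`, `y ∈ Y₀` the vectors `z_k = I_k x + λ_k⁻¹ S_k y` tend to `x`, while by linearity
`λ_k T^{n_k} z_k = λ_k T^{n_k} I_k x + T^{n_k} S_k y` tends to `y`. Choosing `x ∈ U_i` and `y ∈ V_i` by
density, `z_k ∈ U_i` and `λ_k T^{n_k} z_k ∈ V_i` hold for all large `k`, so some `k` serves both
pairs at once. -/

section

variable {𝕜 M N F ι : Type*} [DivisionRing 𝕜]
  [AddCommGroup M] [Module 𝕜 M]
  [AddCommGroup N] [Module 𝕜 N] [TopologicalSpace N] [ContinuousAdd N]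
  [FunLike F M N] [LinearMapClass F 𝕜 M N]
  {l : Filter ι} {A : ι → F} {c : ι → 𝕜} {u v : ι → M} {x : M} {y : N}

theorem tendsto_add_inv_smul [TopologicalSpace M] [ContinuousAdd M] (hu : Tendsto u l (𝓝 x))
    (hv : Tendsto (fun k => (c k)⁻¹ • v k) l (𝓝 0)) :
    Tendsto (fun k => u k + (c k)⁻¹ • v k) l (𝓝 x) := by
  simpa using hu.add hv

theorem tendsto_smul_apply_add_inv_smul (hc : ∀ k, c k ≠ 0)
    (hAu : Tendsto (fun k => c k • A k (u k)) l (𝓝 0))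
    (hAv : Tendsto (fun k => A k (v k)) l (𝓝 y)) :
    Tendsto (fun k => c k • A k (u k + (c k)⁻¹ • v k)) l (𝓝 y) := by
  have hsplit : (fun k => c k • A k (u k + (c k)⁻¹ • v k))
      = fun k => c k • A k (u k) + A k (v k) := by
    funext k
    rw [map_add, smul_add, map_smul, smul_smul, mul_inv_cancel₀ (hc k), one_smul]
  rw [hsplit]
  simpa using hAu.add hAv

theorem eventually_add_inv_smul_mem_and_smul_apply_mem [TopologicalSpace M] [ContinuousAdd M]
    (hc : ∀ k, c k ≠ 0)
    (hu : Tendsto u l (𝓝 x)) (hAu : Tendsto (fun k => c k • A k (u k)) l (𝓝 0))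
    (hv : Tendsto (fun k => (c k)⁻¹ • v k) l (𝓝 0)) (hAv : Tendsto (fun k => A k (v k)) l (𝓝 y))
    {U : Set M} {V : Set N} (hU : U ∈ 𝓝 x) (hV : V ∈ 𝓝 y) :
    ∀ᶠ k in l, u k + (c k)⁻¹ • v k ∈ U ∧ c k • A k (u k + (c k)⁻¹ • v k) ∈ V :=
  ((tendsto_add_inv_smul hu hv).eventually_mem hU).and
    ((tendsto_smul_apply_add_inv_smul hc hAu hAv).eventually_mem hV)

theorem eventually_exists_mem_smul_apply_mem [TopologicalSpace M] [ContinuousAdd M]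
    (hc : ∀ k, c k ≠ 0) {X₀ : Set M} {Y₀ : Set N} (hX₀ : Dense X₀) (hY₀ : Dense Y₀)
    {I : ι → M → M} {S : ι → N → M}
    (hI : ∀ x ∈ X₀, Tendsto (fun k => I k x) l (𝓝 x))
    (hAI : ∀ x ∈ X₀, Tendsto (fun k => c k • A k (I k x)) l (𝓝 0))
    (hS : ∀ y ∈ Y₀, Tendsto (fun k => (c k)⁻¹ • S k y) l (𝓝 0))
    (hAS : ∀ y ∈ Y₀, Tendsto (fun k => A k (S k y)) l (𝓝 y))
    {U : Set M} {V : Set N} (hU : IsOpen U) (hUne : U.Nonempty) (hV : IsOpen V)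
    (hVne : V.Nonempty) :
    ∀ᶠ k in l, ∃ z ∈ U, c k • A k z ∈ V := by
  obtain ⟨x, hxU, hx⟩ := hX₀.inter_open_nonempty U hU hUne
  obtain ⟨y, hyV, hy⟩ := hY₀.inter_open_nonempty V hV hVne
  filter_upwards [eventually_add_inv_smul_mem_and_smul_apply_mem hc (hI x hx) (hAI x hx)
    (hS y hy) (hAS y hy) (hU.mem_nhds hxU) (hV.mem_nhds hyV)] with k hk
  exact ⟨_, hk⟩

end

theorem stmt18_general {X : Type*} [NormedAddCommGroup X] [NormedSpace ℂ X]
    (T : X →L[ℂ] X) (Γ : Set ℂ)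
    (n : ℕ → ℕ)
    (lam : ℕ → ℂ) (hlam : ∀ k, lam k ∈ Γ \ {0})
    (X₀ Y₀ : Set X) (hX₀ : Dense X₀) (hY₀ : Dense Y₀)
    (I S : ℕ → X → X)
    (hI : ∀ x ∈ X₀, Tendsto (fun k => I k x) atTop (nhds x))
    (hTI : ∀ x ∈ X₀, Tendsto (fun k => lam k • (T ^ n k) (I k x)) atTop (nhds 0))
    (hS : ∀ y ∈ Y₀, Tendsto (fun k => (lam k)⁻¹ • S k y) atTop (nhds 0))
    (hTS : ∀ y ∈ Y₀, Tendsto (fun k => (T ^ n k) (S k y)) atTop (nhds y)) :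
    ∀ U₁ U₂ V₁ V₂ : Set X,
      IsOpen U₁ → U₁.Nonempty → IsOpen U₂ → U₂.Nonempty →
      IsOpen V₁ → V₁.Nonempty → IsOpen V₂ → V₂.Nonempty →
      ∃ k : ℕ, ∃ z₁ ∈ U₁, ∃ z₂ ∈ U₂,
        lam k • (T ^ n k) z₁ ∈ V₁ ∧ lam k • (T ^ n k) z₂ ∈ V₂ := by
  intro U₁ U₂ V₁ V₂ hU₁ hU₁ne hU₂ hU₂ne hV₁ hV₁ne hV₂ hV₂ne
  have htransitive {U V : Set X} (hU : IsOpen U) (hUne : U.Nonempty) (hV : IsOpen V)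
      (hVne : V.Nonempty) : ∀ᶠ k in atTop, ∃ z ∈ U, lam k • (T ^ n k) z ∈ V :=
    eventually_exists_mem_smul_apply_mem (A := fun k => T ^ n k) (fun k => (hlam k).2)
      hX₀ hY₀ hI hTI hS hTS hU hUne hV hVne
  obtain ⟨k, ⟨z₁, hz₁, hTz₁⟩, ⟨z₂, hz₂, hTz₂⟩⟩ :=
    ((htransitive hU₁ hU₁ne hV₁ hV₁ne).and (htransitive hU₂ hU₂ne hV₂ hV₂ne)).exists
  exact ⟨k, z₁, hz₁, z₂, hz₂, hTz₁, hTz₂⟩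

/-- The key transitivity step of the `Γ`-supercyclicity criterion: under the
hypotheses of the criterion, for all nonempty open `U₁, U₂, V₁, V₂` there are
`k` and `z₁ ∈ U₁`, `z₂ ∈ U₂` with `(λ_k T^{n_k} z₁, λ_k T^{n_k} z₂) ∈ V₁ × V₂`. -/
theorem stmt18 {X : Type*} [NormedAddCommGroup X] [NormedSpace ℂ X] [CompleteSpace X]
    (hdim : ¬ FiniteDimensional ℂ X)
    (T : X →L[ℂ] X) (Γ : Set ℂ) (hΓ : (Γ \ {0}).Nonempty)
    (n : ℕ → ℕ) (hn : StrictMono n) (hnpos : ∀ k, 0 < n k)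
    (lam : ℕ → ℂ) (hlam : ∀ k, lam k ∈ Γ \ {0})
    (X₀ Y₀ : Set X) (hX₀ : Dense X₀) (hY₀ : Dense Y₀)
    (I S : ℕ → X → X)
    (hI : ∀ x ∈ X₀, Tendsto (fun k => I k x) atTop (nhds x))
    (hTI : ∀ x ∈ X₀, Tendsto (fun k => lam k • (T ^ n k) (I k x)) atTop (nhds 0))
    (hS : ∀ y ∈ Y₀, Tendsto (fun k => (lam k)⁻¹ • S k y) atTop (nhds 0))
    (hTS : ∀ y ∈ Y₀, Tendsto (fun k => (T ^ n k) (S k y)) atTop (nhds y)) :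
    ∀ U₁ U₂ V₁ V₂ : Set X,
      IsOpen U₁ → U₁.Nonempty → IsOpen U₂ → U₂.Nonempty →
      IsOpen V₁ → V₁.Nonempty → IsOpen V₂ → V₂.Nonempty →
      ∃ k : ℕ, ∃ z₁ ∈ U₁, ∃ z₂ ∈ U₂,
        lam k • (T ^ n k) z₁ ∈ V₁ ∧ lam k • (T ^ n k) z₂ ∈ V₂ :=
  stmt18_general T Γ n lam hlam X₀ Y₀ hX₀ hY₀ I S hI hTI hS hTS
end
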